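/- arXiv:2504.19527 — 6 statements merged into one kernel-verified Lean document; each statement's English description precedes it below -/
import Mathlib

section
/- Identifiability of the conditional average treatment effect CATE (Theorem 4.2). Assume monotone missing, strong ignorability, and sequential missing, and that P({A=a} ∩ {R₃=1}) > 0 for a ∈ {0,1}. For a ∈ {0,1}, let m_a : 𝒳 × ℝ × ℝ → ℝ be any measurable function such that m_a(X, S₁, S₂) is a version of the conditional expectation of Y given σ(X, S₁, S₂) under the conditional measure P(·|{A=a} ∩ {R₃=1}), and assume m_a(X, S₁(a), S₂(a)) is P-integrable. Then E[Y(1) − Y(0) | σ(X)] = E[ m₁(X, S₁(1), S₂(1)) − m₀(X, S₁(0), S₂(0)) | σ(X) ] P-almost surely. -/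
/-!
Fix an arm `a`. Since `A` is constant on `{A = a}`, every set of `σ(X, A, S₁, S₂)` meets
`{A = a}` in a set of `σ(X, S₁, S₂)`, so the defining property of `m_a` under
`P(· | A = a, R₃ = 1)` gives
`E[1{R₃ = 1} 1{A = a} Y | X, A, S₁, S₂] = E[1{R₃ = 1} 1{A = a} m_a | X, A, S₁, S₂]`.

Two cancellations then rest on one fact: if `T` is conditionally independent of `f` given `𝒢`,
then `E[1_T f | 𝒢] = E[f | 𝒢] P(T | 𝒢)`, so a positive `P(T | 𝒢)` can be divided out.
With `T = {R₃ = 1}` (sequential missingness, `r₃ > 0`) this removes the selection. Conditioning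
down to `σ(X)` and using consistency on `{A = a}`, then taking `T = {A = a}` (strong ignorability,
`e_a > 0`), gives `E[Y(a) | X] = E[m_a(X, S₁(a), S₂(a)) | X]`; subtract the two arms.
-/

open MeasureTheory ProbabilityTheory
open MeasurableSpace (comap)

namespace Set

lemma indicator_eq_mul_indicator_one {ι M₀ : Type*} [MulZeroOneClass M₀] (s : Set ι)
    (f : ι → M₀) : s.indicator f = f * s.indicator fun _ ↦ 1 := by
  ext i
  by_cases hi : i ∈ s <;> simp [hi]

end Set

namespace MeasurableSpace

variable {Ω : Type*}

lemma sup_eq_generateFrom_image2_inter (m₁ m₂ : MeasurableSpace Ω) :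
    m₁ ⊔ m₂ = generateFrom
      (Set.image2 (· ∩ ·) {s | MeasurableSet[m₁] s} {t | MeasurableSet[m₂] t}) := by
  refine le_antisymm (sup_le ?_ ?_) (generateFrom_le ?_)
  · exact fun s hs ↦ measurableSet_generateFrom
      ⟨s, hs, Set.univ, MeasurableSet.univ, Set.inter_univ s⟩
  · exact fun t ht ↦ measurableSet_generateFrom
      ⟨Set.univ, MeasurableSet.univ, t, ht, Set.univ_inter t⟩
  · rintro _ ⟨s, hs, t, ht, rfl⟩
    exact (le_sup_left (b := m₂) _ hs).inter (le_sup_right (a := m₁) _ ht)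

lemma isPiSystem_image2_inter (m₁ m₂ : MeasurableSpace Ω) :
    IsPiSystem (Set.image2 (· ∩ ·) {s | MeasurableSet[m₁] s} {t | MeasurableSet[m₂] t}) := by
  rintro _ ⟨s₁, hs₁, t₁, ht₁, rfl⟩ _ ⟨s₂, hs₂, t₂, ht₂, rfl⟩ -
  exact ⟨s₁ ∩ s₂, hs₁.inter hs₂, t₁ ∩ t₂, ht₁.inter ht₂, Set.inter_inter_inter_comm _ _ _ _⟩

end MeasurableSpace

namespace MeasureTheory

variable {Ω : Type*} {m m₁ m₂ mΩ : MeasurableSpace Ω} {μ : Measure Ω}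
  {E : Type*} [NormedAddCommGroup E] [NormedSpace ℝ E]

theorem setIntegral_eq_of_forall_inter_eq (hm₁ : m₁ ≤ mΩ) (hm₂ : m₂ ≤ mΩ) {f g : Ω → E}
    (hf : Integrable f μ) (hg : Integrable g μ)
    (hfg : ∀ s t, MeasurableSet[m₁] s → MeasurableSet[m₂] t →
      ∫ x in s ∩ t, f x ∂μ = ∫ x in s ∩ t, g x ∂μ)
    {s : Set Ω} (hs : MeasurableSet[m₁ ⊔ m₂] s) : ∫ x in s, f x ∂μ = ∫ x in s, g x ∂μ := by
  have hle : m₁ ⊔ m₂ ≤ mΩ := sup_le hm₁ hm₂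
  induction s, hs using MeasurableSpace.induction_on_inter
    (MeasurableSpace.sup_eq_generateFrom_image2_inter m₁ m₂)
    (MeasurableSpace.isPiSystem_image2_inter m₁ m₂) with
  | empty => simp
  | basic _ hst =>
    obtain ⟨s, hs, t, ht, rfl⟩ := hst
    exact hfg s t hs ht
  | compl t ht ih =>
    have hf_add := integral_add_compl (hle _ ht) hf
    have hg_add := integral_add_compl (hle _ ht) hg
    have hfg_univ : ∫ x, f x ∂μ = ∫ x, g x ∂μ := by
      simpa using hfg Set.univ Set.univ MeasurableSet.univ MeasurableSet.univ
    rw [ih] at hf_add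
    exact add_left_cancel (hf_add.trans (hfg_univ.trans hg_add.symm))
  | iUnion t hdisj ht ih =>
    have hmeas i := hle _ (ht i)
    exact (hasSum_integral_iUnion hmeas hdisj hf.integrableOn).unique
      (by simpa only [ih] using hasSum_integral_iUnion hmeas hdisj hg.integrableOn)

theorem setIntegral_inter_eq_of_ae_eq_condExp_cond [CompleteSpace E] [IsFiniteMeasure μ]
    (hm : m ≤ mΩ) {s : Set Ω} {f g : Ω → E}
    (hf : IntegrableOn f s μ) (hg : g =ᵐ[μ[|s]] μ[|s][f | m]) {G : Set Ω}
    (hG : MeasurableSet[m] G) : ∫ x in G ∩ s, g x ∂μ = ∫ x in G ∩ s, f x ∂μ := by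
  rcases eq_or_ne (μ s) 0 with hs₀ | hs₀
  · have : μ.restrict (G ∩ s) = 0 :=
      Measure.restrict_eq_zero.mpr (measure_mono_null Set.inter_subset_right hs₀)
    simp [this]
  have hc : (μ s)⁻¹.toReal ≠ 0 :=
    ENNReal.toReal_ne_zero.mpr ⟨ENNReal.inv_ne_zero.mpr (measure_ne_top μ s),
      ENNReal.inv_ne_top.mpr hs₀⟩
  have hcond : ∀ φ : Ω → E,
      ∫ x in G, φ x ∂μ[|s] = (μ s)⁻¹.toReal • ∫ x in G ∩ s, φ x ∂μ := by
    intro φ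
    rw [ProbabilityTheory.cond, Measure.restrict_smul, integral_smul_measure,
      Measure.restrict_restrict (hm _ hG)]
  have hGs : ∫ x in G, g x ∂μ[|s] = ∫ x in G, f x ∂μ[|s] :=
    (setIntegral_congr_ae (hm _ hG) (hg.mono fun _ h _ ↦ h)).trans
      (setIntegral_condExp hm (hf.smul_measure (ENNReal.inv_ne_top.mpr hs₀)) hG)
  rw [hcond, hcond] at hGs
  exact smul_right_injective E hc hGs

theorem condExp_indicator_ae_eq_of_ae_eq_condExp_cond (hm : m ≤ mΩ) [IsFiniteMeasure μ]
    {β : Type*} [MeasurableSpace β] [MeasurableSingletonClass β]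
    {A : Ω → β} (hA : Measurable A) (a : β)
    {R : Set Ω} (hR : MeasurableSet R) {f g : Ω → ℝ}
    (hf : IntegrableOn f {ω | A ω = a} μ) (hg : IntegrableOn g {ω | A ω = a} μ)
    (hfg : g =ᵐ[μ[|{ω | A ω = a} ∩ R]] μ[|{ω | A ω = a} ∩ R][f | m]) :
    μ[R.indicator ({ω | A ω = a}.indicator f) | m ⊔ comap A inferInstance]
      =ᵐ[μ] μ[R.indicator ({ω | A ω = a}.indicator g) | m ⊔ comap A inferInstance] := by
  set S := {ω | A ω = a}
  have hS : MeasurableSet S := hA (measurableSet_singleton a)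
  have hH : m ⊔ comap A inferInstance ≤ mΩ := sup_le hm hA.comap_le
  have hintegrable : ∀ φ : Ω → ℝ, IntegrableOn φ S μ → Integrable (R.indicator (S.indicator φ)) μ :=
    fun _ hφ ↦ ((integrable_indicator_iff hS).2 hφ).indicator hR
  refine ae_eq_condExp_of_forall_setIntegral_eq hH (hintegrable g hg)
    (fun _ _ _ ↦ integrable_condExp.integrableOn) (fun t ht _ ↦ ?_)
    stronglyMeasurable_condExp.aestronglyMeasurable
  rw [setIntegral_condExp hH (hintegrable f hf) ht]
  refine setIntegral_eq_of_forall_inter_eq hm hA.comap_le (hintegrable f hf) (hintegrable g hg)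
    ?_ ht
  rintro G _ hG ⟨B, -, rfl⟩
  simp only [Set.indicator_indicator, setIntegral_indicator (hR.inter hS)]
  -- `A ⁻¹' B` contains all of `S` or none of it.
  by_cases haB : a ∈ B
  · have hGB : G ∩ A ⁻¹' B ∩ (R ∩ S) = G ∩ (S ∩ R) := by
      ext ω
      simp only [S, Set.mem_inter_iff, Set.mem_preimage, Set.mem_ofPred_eq]
      constructor
      · rintro ⟨⟨hωG, -⟩, hωR, hωA⟩
        exact ⟨hωG, hωA, hωR⟩
      · rintro ⟨hωG, hωA, hωR⟩
        exact ⟨⟨hωG, hωA ▸ haB⟩, hωR, hωA⟩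
    rw [hGB, setIntegral_inter_eq_of_ae_eq_condExp_cond hm (hf.mono_set Set.inter_subset_left)
      hfg hG]
  · have hGB : G ∩ A ⁻¹' B ∩ (R ∩ S) = ∅ := by
      ext ω
      simp only [S, Set.mem_inter_iff, Set.mem_preimage, Set.mem_ofPred_eq,
        Set.mem_empty_iff_false, iff_false]
      rintro ⟨⟨-, hωB⟩, -, hωA⟩
      exact haB (hωA ▸ hωB)
    simp [hGB]

end MeasureTheory

namespace ProbabilityTheory

variable {Ω : Type*} {m' m₁ m₂ mΩ : MeasurableSpace Ω} {μ : Measure Ω}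

lemma ae_norm_condExp_indicator_le_one (m : MeasurableSpace Ω) (T : Set Ω) :
    ∀ᵐ ω ∂μ, ‖(μ⟦T | m⟧) ω‖ ≤ 1 := by
  simp_rw [Real.norm_eq_abs]
  exact ae_bdd_abs_condExp_of_ae_bdd_abs (Filter.Eventually.of_forall fun ω ↦ by
    by_cases hω : ω ∈ T <;> simp [hω])

variable [StandardBorelSpace Ω] {hm' : m' ≤ mΩ} [IsFiniteMeasure μ] {T : Set Ω}

theorem CondIndep.condExp_indicator_sup_ae_eq (h : CondIndep m' m₁ m₂ hm' μ)
    (hm₁ : m₁ ≤ mΩ) (hm₂ : m₂ ≤ mΩ) (hT : MeasurableSet[m₂] T) :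
    μ⟦T | m' ⊔ m₁⟧ =ᵐ[μ] μ⟦T | m'⟧ := by
  have hTm := hm₂ _ hT
  have hTi : Integrable (T.indicator fun _ ↦ (1 : ℝ)) μ := (integrable_const 1).indicator hTm
  have hrect : ∀ s t, MeasurableSet[m'] s → MeasurableSet[m₁] t →
      ∫ x in s ∩ t, (μ⟦T | m'⟧) x ∂μ = ∫ x in s ∩ t, T.indicator (fun _ ↦ (1 : ℝ)) x ∂μ := by
    intro s t hs ht
    have htm := hm₁ _ ht
    have hprod : μ⟦t | m'⟧ * μ⟦T | m'⟧ =ᵐ[μ] μ⟦t ∩ T | m'⟧ :=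
      ((condIndep_iff m' m₁ m₂ hm' hm₁ hm₂ μ).mp h t T ht hT).symm
    have hpull : μ[t.indicator (μ⟦T | m'⟧) | m'] =ᵐ[μ] μ⟦T | m'⟧ * μ⟦t | m'⟧ := by
      rw [Set.indicator_eq_mul_indicator_one]
      exact condExp_mul_of_stronglyMeasurable_left stronglyMeasurable_condExp
        (by rw [← Set.indicator_eq_mul_indicator_one]; exact integrable_condExp.indicator htm)
        ((integrable_const 1).indicator htm)
    calc ∫ x in s ∩ t, (μ⟦T | m'⟧) x ∂μ
        = ∫ x in s, μ[t.indicator (μ⟦T | m'⟧) | m'] x ∂μ := by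
          rw [setIntegral_condExp hm' (integrable_condExp.indicator htm) hs,
            setIntegral_indicator htm]
      _ = ∫ x in s, (μ⟦t ∩ T | m'⟧) x ∂μ := by
          refine setIntegral_congr_ae (hm' _ hs) ((hpull.trans ?_).mono fun _ h _ ↦ h)
          rw [mul_comm]
          exact hprod
      _ = ∫ x in s ∩ t, T.indicator (fun _ ↦ (1 : ℝ)) x ∂μ := by
          rw [setIntegral_condExp hm' ((integrable_const 1).indicator (htm.inter hTm)) hs,
            setIntegral_indicator (htm.inter hTm), setIntegral_indicator hTm, Set.inter_assoc]
  exact (ae_eq_condExp_of_forall_setIntegral_eq (sup_le hm' hm₁) hTi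
    (fun _ _ _ ↦ integrable_condExp.integrableOn)
    (fun s hs _ ↦ setIntegral_eq_of_forall_inter_eq hm' hm₁ integrable_condExp hTi hrect hs)
    (stronglyMeasurable_condExp.mono (le_sup_left : m' ≤ m' ⊔ m₁)).aestronglyMeasurable).symm

theorem CondIndep.condExp_indicator_ae_eq_mul (h : CondIndep m' m₁ m₂ hm' μ)
    (hm₁ : m₁ ≤ mΩ) (hm₂ : m₂ ≤ mΩ) (hT : MeasurableSet[m₂] T) {f : Ω → ℝ}
    (hf : StronglyMeasurable[m' ⊔ m₁] f) (hfi : Integrable f μ) :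
    μ[T.indicator f | m'] =ᵐ[μ] μ[f | m'] * μ⟦T | m'⟧ := by
  have hTm := hm₂ _ hT
  have hpull : μ[T.indicator f | m' ⊔ m₁] =ᵐ[μ] f * μ⟦T | m' ⊔ m₁⟧ := by
    rw [Set.indicator_eq_mul_indicator_one]
    exact condExp_mul_of_stronglyMeasurable_left hf
      (by rw [← Set.indicator_eq_mul_indicator_one]; exact hfi.indicator hTm)
      ((integrable_const 1).indicator hTm)
  have hdrop : f * μ⟦T | m' ⊔ m₁⟧ =ᵐ[μ] μ⟦T | m'⟧ * f := by
    filter_upwards [h.condExp_indicator_sup_ae_eq hm₁ hm₂ hT] with ω hω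
    simp [hω, mul_comm]
  calc μ[T.indicator f | m']
      =ᵐ[μ] μ[μ[T.indicator f | m' ⊔ m₁] | m'] :=
        (condExp_condExp_of_le le_sup_left (sup_le hm' hm₁)).symm
    _ =ᵐ[μ] μ[μ⟦T | m'⟧ * f | m'] := condExp_congr_ae (hpull.trans hdrop)
    _ =ᵐ[μ] μ⟦T | m'⟧ * μ[f | m'] :=
        condExp_stronglyMeasurable_mul_of_bound hm' stronglyMeasurable_condExp hfi 1
          (ae_norm_condExp_indicator_le_one m' T)
    _ = μ[f | m'] * μ⟦T | m'⟧ := mul_comm _ _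

theorem CondIndep.condExp_ae_eq_of_condExp_indicator_ae_eq (h : CondIndep m' m₁ m₂ hm' μ)
    (hm₁ : m₁ ≤ mΩ) (hm₂ : m₂ ≤ mΩ) (hT : MeasurableSet[m₂] T)
    (hpos : ∀ᵐ ω ∂μ, 0 < (μ⟦T | m'⟧) ω) {f g : Ω → ℝ}
    (hf : StronglyMeasurable[m' ⊔ m₁] f) (hfi : Integrable f μ)
    (hg : StronglyMeasurable[m' ⊔ m₁] g) (hgi : Integrable g μ)
    (hfg : μ[T.indicator f | m'] =ᵐ[μ] μ[T.indicator g | m']) :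
    μ[f | m'] =ᵐ[μ] μ[g | m'] := by
  filter_upwards [(h.condExp_indicator_ae_eq_mul hm₁ hm₂ hT hf hfi).symm.trans
    (hfg.trans (h.condExp_indicator_ae_eq_mul hm₁ hm₂ hT hg hgi)), hpos] with ω hω hω_pos
  exact mul_right_cancel₀ hω_pos.ne' hω

end ProbabilityTheory

section PotentialOutcomes

variable {Ω 𝓧 β : Type*} [mΩ : MeasurableSpace Ω] [StandardBorelSpace Ω]
  [m𝓧 : MeasurableSpace 𝓧] [MeasurableSpace β] [MeasurableSingletonClass β]
  {P : Measure Ω} [IsFiniteMeasure P] {X : Ω → 𝓧} {A : Ω → β} {S₁o S₂o Yo : Ω → ℝ}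

theorem condExp_indicator_observed_ae_eq_regression (hX : Measurable X) (hA : Measurable A)
    (hS₁o : Measurable S₁o) (hS₂o : Measurable S₂o) (hYo : Measurable Yo)
    {R₃ : Ω → Bool} (hR₃ : Measurable R₃) {m : 𝓧 × ℝ × ℝ → ℝ} (hm : Measurable m) (a : β)
    (hseq3 : CondIndep
      (comap X m𝓧 ⊔ comap A inferInstance ⊔ comap S₁o inferInstance ⊔ comap S₂o inferInstance)
      (comap R₃ inferInstance) (comap Yo inferInstance)
      (sup_le (sup_le (sup_le hX.comap_le hA.comap_le) hS₁o.comap_le) hS₂o.comap_le) P)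
    (hr₃pos : ∀ᵐ ω ∂P, 0 < (P⟦{ω | R₃ ω = true} |
      comap X m𝓧 ⊔ comap A inferInstance ⊔ comap S₁o inferInstance ⊔ comap S₂o inferInstance⟧) ω)
    (hmVer : (fun ω ↦ m (X ω, S₁o ω, S₂o ω)) =ᵐ[P[|{ω | A ω = a} ∩ {ω | R₃ ω = true}]]
      (P[|{ω | A ω = a} ∩ {ω | R₃ ω = true}])[Yo |
        comap X m𝓧 ⊔ comap S₁o inferInstance ⊔ comap S₂o inferInstance])
    (hYoi : IntegrableOn Yo {ω | A ω = a} P)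
    (hmi : IntegrableOn (fun ω ↦ m (X ω, S₁o ω, S₂o ω)) {ω | A ω = a} P) :
    P[{ω | A ω = a}.indicator Yo |
        comap X m𝓧 ⊔ comap A inferInstance ⊔ comap S₁o inferInstance ⊔ comap S₂o inferInstance]
      =ᵐ[P] P[{ω | A ω = a}.indicator (fun ω ↦ m (X ω, S₁o ω, S₂o ω)) |
        comap X m𝓧 ⊔ comap A inferInstance ⊔ comap S₁o inferInstance
          ⊔ comap S₂o inferInstance] := by
  have hS : MeasurableSet {ω | A ω = a} := hA (measurableSet_singleton a)
  set K := comap X m𝓧 ⊔ comap S₁o inferInstance ⊔ comap S₂o inferInstance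
  set mA := comap A inferInstance
  set H := comap X m𝓧 ⊔ mA ⊔ comap S₁o inferInstance ⊔ comap S₂o inferInstance
  have hH : H = K ⊔ mA := by simp only [H, K, sup_right_comm _ mA]
  have hK : K ≤ mΩ := sup_le (sup_le hX.comap_le hS₁o.comap_le) hS₂o.comap_le
  have hKH : K ≤ H ⊔ comap Yo inferInstance := (hH ▸ le_sup_left : K ≤ H).trans le_sup_left
  have hSH : MeasurableSet[H ⊔ comap Yo inferInstance] {ω | A ω = a} :=
    ((hH ▸ le_sup_right : mA ≤ H).trans le_sup_left) _
      (comap_measurable A (measurableSet_singleton a))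
  have hR : MeasurableSet[comap R₃ inferInstance] {ω | R₃ ω = true} :=
    comap_measurable R₃ (measurableSet_singleton true)
  have hYo_meas : Measurable[H ⊔ comap Yo inferInstance] ({ω | A ω = a}.indicator Yo) :=
    ((comap_measurable Yo).mono le_sup_right le_rfl).indicator hSH
  have hm_meas : Measurable[H ⊔ comap Yo inferInstance]
      ({ω | A ω = a}.indicator fun ω ↦ m (X ω, S₁o ω, S₂o ω)) := by
    refine (hm.comp (Measurable.prodMk ?_ (Measurable.prodMk ?_ ?_))).indicator hSH
    · exact (comap_measurable X).mono ((le_sup_left.trans le_sup_left).trans hKH) le_rfl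
    · exact (comap_measurable S₁o).mono ((le_sup_right.trans le_sup_left).trans hKH) le_rfl
    · exact (comap_measurable S₂o).mono (le_sup_right.trans hKH) le_rfl
  refine hseq3.symm.condExp_ae_eq_of_condExp_indicator_ae_eq hYo.comap_le hR₃.comap_le hR
    hr₃pos hYo_meas.stronglyMeasurable ((integrable_indicator_iff hS).2 hYoi)
    hm_meas.stronglyMeasurable ((integrable_indicator_iff hS).2 hmi) ?_
  change P[_ | H] =ᵐ[P] P[_ | H]
  rw [hH]
  exact condExp_indicator_ae_eq_of_ae_eq_condExp_cond hK hA a (hR₃.comap_le _ hR) hYoi hmi hmVer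

theorem condExp_potentialOutcome_ae_eq_condExp_regression (hX : Measurable X)
    (hA : Measurable A) {S₁ S₂ Y : β → Ω → ℝ} (a : β)
    (hS₁ : Measurable (S₁ a)) (hS₂ : Measurable (S₂ a)) (hY : Measurable (Y a))
    (hYi : Integrable (Y a) P)
    (hS₁o : Measurable S₁o) (hS₂o : Measurable S₂o) (hYo : Measurable Yo)
    (hcons₁ : S₁o = fun ω ↦ S₁ (A ω) ω) (hcons₂ : S₂o = fun ω ↦ S₂ (A ω) ω)
    (hconsY : Yo = fun ω ↦ Y (A ω) ω)
    {R₃ : Ω → Bool} (hR₃ : Measurable R₃) {m : 𝓧 × ℝ × ℝ → ℝ} (hm : Measurable m)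
    (hunconf : CondIndep (comap X m𝓧)
      (comap (fun ω ↦ (S₁ a ω, S₂ a ω, Y a ω)) inferInstance)
      (comap A inferInstance) hX.comap_le P)
    (hpos : ∀ᵐ ω ∂P, 0 < (P⟦{ω | A ω = a} | comap X m𝓧⟧) ω)
    (hseq3 : CondIndep
      (comap X m𝓧 ⊔ comap A inferInstance ⊔ comap S₁o inferInstance ⊔ comap S₂o inferInstance)
      (comap R₃ inferInstance) (comap Yo inferInstance)
      (sup_le (sup_le (sup_le hX.comap_le hA.comap_le) hS₁o.comap_le) hS₂o.comap_le) P)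
    (hr₃pos : ∀ᵐ ω ∂P, 0 < (P⟦{ω | R₃ ω = true} |
      comap X m𝓧 ⊔ comap A inferInstance ⊔ comap S₁o inferInstance ⊔ comap S₂o inferInstance⟧) ω)
    (hmVer : (fun ω ↦ m (X ω, S₁o ω, S₂o ω)) =ᵐ[P[|{ω | A ω = a} ∩ {ω | R₃ ω = true}]]
      (P[|{ω | A ω = a} ∩ {ω | R₃ ω = true}])[Yo |
        comap X m𝓧 ⊔ comap S₁o inferInstance ⊔ comap S₂o inferInstance])
    (hmi : Integrable (fun ω ↦ m (X ω, S₁ a ω, S₂ a ω)) P) :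
    P[Y a | comap X m𝓧] =ᵐ[P] P[fun ω ↦ m (X ω, S₁ a ω, S₂ a ω) | comap X m𝓧] := by
  set S := {ω | A ω = a}
  have hS : MeasurableSet S := hA (measurableSet_singleton a)
  have hYo_eq : S.indicator Yo = S.indicator (Y a) :=
    Set.indicator_congr fun ω (hω : A ω = a) ↦ by simp only [hconsY, hω]
  have hmo_eq : S.indicator (fun ω ↦ m (X ω, S₁o ω, S₂o ω))
      = S.indicator (fun ω ↦ m (X ω, S₁ a ω, S₂ a ω)) :=
    Set.indicator_congr fun ω (hω : A ω = a) ↦ by simp only [hcons₁, hcons₂, hω]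
  have hobs := condExp_indicator_observed_ae_eq_regression hX hA hS₁o hS₂o hYo hR₃ hm a
    hseq3 hr₃pos hmVer ((integrable_indicator_iff hS).1 (hYo_eq ▸ hYi.indicator hS))
    ((integrable_indicator_iff hS).1 (hmo_eq ▸ hmi.indicator hS))
  have hH_le := sup_le (sup_le (sup_le hX.comap_le hA.comap_le) hS₁o.comap_le) hS₂o.comap_le
  have hXH : comap X m𝓧 ≤
      comap X m𝓧 ⊔ comap A inferInstance ⊔ comap S₁o inferInstance ⊔ comap S₂o inferInstance :=
    le_sup_left.trans (le_sup_left.trans le_sup_left)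
  have htreated : P[S.indicator (Y a) | comap X m𝓧]
      =ᵐ[P] P[S.indicator (fun ω ↦ m (X ω, S₁ a ω, S₂ a ω)) | comap X m𝓧] := by
    rw [← hYo_eq, ← hmo_eq]
    exact (condExp_condExp_of_le hXH hH_le).symm.trans
      ((condExp_congr_ae hobs).trans (condExp_condExp_of_le hXH hH_le))
  have htriple : Measurable[comap X m𝓧 ⊔ comap (fun ω ↦ (S₁ a ω, S₂ a ω, Y a ω)) inferInstance]
      fun ω ↦ (S₁ a ω, S₂ a ω, Y a ω) := (comap_measurable _).mono le_sup_right le_rfl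
  exact hunconf.condExp_ae_eq_of_condExp_indicator_ae_eq
    (hS₁.prodMk (hS₂.prodMk hY)).comap_le hA.comap_le
    (comap_measurable A (measurableSet_singleton a)) hpos
    htriple.snd.snd.stronglyMeasurable hYi
    (hm.comp (((comap_measurable X).mono le_sup_left le_rfl).prodMk
      (htriple.fst.prodMk htriple.snd.fst))).stronglyMeasurable hmi htreated

end PotentialOutcomes

theorem stmt1_general
    {Ω 𝓧 : Type*} [mΩ : MeasurableSpace Ω] [StandardBorelSpace Ω]
    [m𝓧 : MeasurableSpace 𝓧]
    (P : Measure Ω) [IsProbabilityMeasure P]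
    (X : Ω → 𝓧) (hX : Measurable X)
    (A : Ω → Bool) (hA : Measurable A)
    -- potential outcomes and their observed versions (consistency)
    (S₁ S₂ Y : Bool → Ω → ℝ)
    (hS₁ : ∀ a, Measurable (S₁ a)) (hS₂ : ∀ a, Measurable (S₂ a))
    (hYmeas : ∀ a, Measurable (Y a)) (hYint : ∀ a, Integrable (Y a) P)
    (S₁o S₂o Yo : Ω → ℝ)
    (hS₁o : Measurable S₁o) (hS₂o : Measurable S₂o) (hYo : Measurable Yo)
    (hcons₁ : S₁o = fun ω => S₁ (A ω) ω)
    (hcons₂ : S₂o = fun ω => S₂ (A ω) ω)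
    (hconsY : Yo = fun ω => Y (A ω) ω)
    -- missingness indicators
    (R₃ : Ω → Bool)
    (hR₃ : Measurable R₃)
    -- Assumption 2 (strong ignorability): (S₁(a), S₂(a), Y(a)) ⫫ A | σ(X), and overlap
    (hunconf : ∀ a : Bool, CondIndep (MeasurableSpace.comap X m𝓧)
      (MeasurableSpace.comap (fun ω => (S₁ a ω, S₂ a ω, Y a ω)) inferInstance)
      (MeasurableSpace.comap A inferInstance) hX.comap_le P)
    (e : Bool → 𝓧 → ℝ)
    (heVer : ∀ a : Bool, (fun ω => e a (X ω)) =ᵐ[P]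
      P[({ω | A ω = a}).indicator (fun _ => (1 : ℝ)) | MeasurableSpace.comap X m𝓧])
    (hePos : ∀ a : Bool, ∀ᵐ ω ∂P, 0 < e a (X ω) ∧ e a (X ω) < 1)
    -- Assumption 4 (sequential missing, observed form)
    (hseq3 : CondIndep
      (MeasurableSpace.comap X m𝓧 ⊔ MeasurableSpace.comap A inferInstance
        ⊔ MeasurableSpace.comap S₁o inferInstance ⊔ MeasurableSpace.comap S₂o inferInstance)
      (MeasurableSpace.comap R₃ inferInstance) (MeasurableSpace.comap Yo inferInstance)
      (sup_le (sup_le (sup_le hX.comap_le hA.comap_le) hS₁o.comap_le) hS₂o.comap_le) P)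
    -- positivity of the selection scores
    (hr₃pos : ∀ᵐ ω ∂P, 0 < (P[({ω' | R₃ ω' = true}).indicator (fun _ => (1 : ℝ)) |
      MeasurableSpace.comap X m𝓧 ⊔ MeasurableSpace.comap A inferInstance
        ⊔ MeasurableSpace.comap S₁o inferInstance ⊔ MeasurableSpace.comap S₂o inferInstance]) ω)
    -- regression functions: versions of E[Y | σ(X,S₁,S₂)] under P(·|{A=a} ∩ {R₃=1})
    (m : Bool → 𝓧 × ℝ × ℝ → ℝ) (hm : ∀ a, Measurable (m a))
    (hmVer : ∀ a : Bool, (fun ω => m a (X ω, S₁o ω, S₂o ω))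
      =ᵐ[P[|{ω | A ω = a} ∩ {ω | R₃ ω = true}]]
      (P[|{ω | A ω = a} ∩ {ω | R₃ ω = true}])[Yo |
        MeasurableSpace.comap X m𝓧 ⊔ MeasurableSpace.comap S₁o inferInstance
          ⊔ MeasurableSpace.comap S₂o inferInstance])
    (hmInt : ∀ a : Bool, Integrable (fun ω => m a (X ω, S₁ a ω, S₂ a ω)) P) :
    P[fun ω => Y true ω - Y false ω | MeasurableSpace.comap X m𝓧]
      =ᵐ[P] P[fun ω => m true (X ω, S₁ true ω, S₂ true ω)
        - m false (X ω, S₁ false ω, S₂ false ω) | MeasurableSpace.comap X m𝓧] := by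
  have hpos : ∀ a, ∀ᵐ ω ∂P, 0 < (P⟦{ω | A ω = a} | comap X m𝓧⟧) ω := by
    intro a
    filter_upwards [heVer a, hePos a] with ω he_eq he_pos
    exact he_eq ▸ he_pos.1
  have hcate : ∀ a, P[Y a | comap X m𝓧]
      =ᵐ[P] P[fun ω ↦ m a (X ω, S₁ a ω, S₂ a ω) | comap X m𝓧] := fun a ↦
    condExp_potentialOutcome_ae_eq_condExp_regression hX hA a (hS₁ a) (hS₂ a) (hYmeas a)
      (hYint a) hS₁o hS₂o hYo hcons₁ hcons₂ hconsY hR₃ (hm a) (hunconf a) (hpos a) hseq3 hr₃pos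
      (hmVer a) (hmInt a)
  calc P[Y true - Y false | comap X m𝓧]
      =ᵐ[P] P[Y true | comap X m𝓧] - P[Y false | comap X m𝓧] :=
        condExp_sub (hYint true) (hYint false) _
    _ =ᵐ[P] P[fun ω ↦ m true (X ω, S₁ true ω, S₂ true ω) | comap X m𝓧]
        - P[fun ω ↦ m false (X ω, S₁ false ω, S₂ false ω) | comap X m𝓧] :=
        (hcate true).sub (hcate false)
    _ =ᵐ[P] _ := (condExp_sub (hmInt true) (hmInt false) _).symm

/-- **Identifiability of the CATE (Theorem 4.2).** Under monotone missing, strong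
ignorability, and sequential missing, `E[Y(1) − Y(0) | σ(X)]` equals
`E[m₁(X, S₁(1), S₂(1)) − m₀(X, S₁(0), S₂(0)) | σ(X)]` `P`-a.s., where `m_a(X,S₁,S₂)` is any
version of `E[Y | σ(X,S₁,S₂)]` under `P(·|{A=a} ∩ {R₃=1})`. (Arm `1` is `true`, arm `0` is
`false`.) -/
theorem stmt1
    {Ω 𝓧 : Type*} [mΩ : MeasurableSpace Ω] [StandardBorelSpace Ω] [Nonempty Ω]
    [m𝓧 : MeasurableSpace 𝓧] [StandardBorelSpace 𝓧]
    (P : Measure Ω) [IsProbabilityMeasure P]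
    (X : Ω → 𝓧) (hX : Measurable X)
    (A : Ω → Bool) (hA : Measurable A)
    -- potential outcomes and their observed versions (consistency)
    (S₁ S₂ Y : Bool → Ω → ℝ)
    (hS₁ : ∀ a, Measurable (S₁ a)) (hS₂ : ∀ a, Measurable (S₂ a))
    (hYmeas : ∀ a, Measurable (Y a)) (hYint : ∀ a, Integrable (Y a) P)
    (S₁o S₂o Yo : Ω → ℝ)
    (hS₁o : Measurable S₁o) (hS₂o : Measurable S₂o) (hYo : Measurable Yo)
    (hcons₁ : S₁o = fun ω => S₁ (A ω) ω)
    (hcons₂ : S₂o = fun ω => S₂ (A ω) ω)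
    (hconsY : Yo = fun ω => Y (A ω) ω)
    -- missingness indicators
    (R₁ R₂ R₃ : Ω → Bool)
    (hR₁ : Measurable R₁) (hR₂ : Measurable R₂) (hR₃ : Measurable R₃)
    -- Assumption 1 (monotone missing): R₃ ≤ R₂ ≤ R₁
    (hmono32 : ∀ ω, R₃ ω = true → R₂ ω = true)
    (hmono21 : ∀ ω, R₂ ω = true → R₁ ω = true)
    -- Assumption 2 (strong ignorability): (S₁(a), S₂(a), Y(a)) ⫫ A | σ(X), and overlap
    (hunconf : ∀ a : Bool, CondIndep (MeasurableSpace.comap X m𝓧)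
      (MeasurableSpace.comap (fun ω => (S₁ a ω, S₂ a ω, Y a ω)) inferInstance)
      (MeasurableSpace.comap A inferInstance) hX.comap_le P)
    (e : Bool → 𝓧 → ℝ) (he : ∀ a, Measurable (e a))
    (heVer : ∀ a : Bool, (fun ω => e a (X ω)) =ᵐ[P]
      P[({ω | A ω = a}).indicator (fun _ => (1 : ℝ)) | MeasurableSpace.comap X m𝓧])
    (hePos : ∀ a : Bool, ∀ᵐ ω ∂P, 0 < e a (X ω) ∧ e a (X ω) < 1)
    -- Assumption 4 (sequential missing, observed form)
    (hseq3 : CondIndep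
      (MeasurableSpace.comap X m𝓧 ⊔ MeasurableSpace.comap A inferInstance
        ⊔ MeasurableSpace.comap S₁o inferInstance ⊔ MeasurableSpace.comap S₂o inferInstance)
      (MeasurableSpace.comap R₃ inferInstance) (MeasurableSpace.comap Yo inferInstance)
      (sup_le (sup_le (sup_le hX.comap_le hA.comap_le) hS₁o.comap_le) hS₂o.comap_le) P)
    (hseq2 : CondIndep
      (MeasurableSpace.comap X m𝓧 ⊔ MeasurableSpace.comap A inferInstance
        ⊔ MeasurableSpace.comap S₁o inferInstance)
      (MeasurableSpace.comap R₂ inferInstance) (MeasurableSpace.comap S₂o inferInstance)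
      (sup_le (sup_le hX.comap_le hA.comap_le) hS₁o.comap_le) P)
    (hseq1 : CondIndep (MeasurableSpace.comap X m𝓧 ⊔ MeasurableSpace.comap A inferInstance)
      (MeasurableSpace.comap R₁ inferInstance) (MeasurableSpace.comap S₁o inferInstance)
      (sup_le hX.comap_le hA.comap_le) P)
    -- positivity of the selection scores
    (hr₃pos : ∀ᵐ ω ∂P, 0 < (P[({ω' | R₃ ω' = true}).indicator (fun _ => (1 : ℝ)) |
      MeasurableSpace.comap X m𝓧 ⊔ MeasurableSpace.comap A inferInstance
        ⊔ MeasurableSpace.comap S₁o inferInstance ⊔ MeasurableSpace.comap S₂o inferInstance]) ω)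
    (hr₂pos : ∀ᵐ ω ∂P, 0 < (P[({ω' | R₂ ω' = true}).indicator (fun _ => (1 : ℝ)) |
      MeasurableSpace.comap X m𝓧 ⊔ MeasurableSpace.comap A inferInstance
        ⊔ MeasurableSpace.comap S₁o inferInstance]) ω)
    (hr₁pos : ∀ᵐ ω ∂P, 0 < (P[({ω' | R₁ ω' = true}).indicator (fun _ => (1 : ℝ)) |
      MeasurableSpace.comap X m𝓧 ⊔ MeasurableSpace.comap A inferInstance]) ω)
    -- positive probability of being observed in each arm
    (hab : ∀ a : Bool, 0 < P ({ω | A ω = a} ∩ {ω | R₃ ω = true}))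
    -- regression functions: versions of E[Y | σ(X,S₁,S₂)] under P(·|{A=a} ∩ {R₃=1})
    (m : Bool → 𝓧 × ℝ × ℝ → ℝ) (hm : ∀ a, Measurable (m a))
    (hmVer : ∀ a : Bool, (fun ω => m a (X ω, S₁o ω, S₂o ω))
      =ᵐ[P[|{ω | A ω = a} ∩ {ω | R₃ ω = true}]]
      (P[|{ω | A ω = a} ∩ {ω | R₃ ω = true}])[Yo |
        MeasurableSpace.comap X m𝓧 ⊔ MeasurableSpace.comap S₁o inferInstance
          ⊔ MeasurableSpace.comap S₂o inferInstance])
    (hmInt : ∀ a : Bool, Integrable (fun ω => m a (X ω, S₁ a ω, S₂ a ω)) P) :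
    P[fun ω => Y true ω - Y false ω | MeasurableSpace.comap X m𝓧]
      =ᵐ[P] P[fun ω => m true (X ω, S₁ true ω, S₂ true ω)
        - m false (X ω, S₁ false ω, S₂ false ω) | MeasurableSpace.comap X m𝓧] :=
  stmt1_general (mΩ := mΩ) (m𝓧 := m𝓧) P X hX A hA S₁ S₂ Y hS₁ hS₂ hYmeas hYint S₁o S₂o Yo hS₁o hS₂o
    hYo hcons₁ hcons₂ hconsY R₃ hR₃ hunconf e heVer hePos hseq3 hr₃pos m hm hmVer hmInt
end

section
/- Unconditional inverse probability weighting identity for the arm-wise long-term mean. Fix a ∈ {0,1}. Assume consistency, that (S₁(a), S₂(a), Y(a)) ⫫ A | σ(X), and that R₃ ⫫ Y | σ(X, A, S₁, S₂). Let e_a : 𝒳 → ℝ be measurable with e_a(X) a version of P(A=a | σ(X)) and e_a(X) > 0 P-a.s., and let r₃ be a σ(X, A, S₁, S₂)-measurable random variable that is a version of P(R₃=1 | σ(X, A, S₁, S₂)) with r₃ > 0 P-a.s. Assume 𝟙{A=a} · R₃ · Y / (e_a(X) · r₃) is P-integrable. Then E[ 𝟙{A=a} · R₃ · Y / (e_a(X)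 · r₃) ] = E[ Y(a) ]. -/
/-!
Condition first on `𝒢 = σ(X, A, S₁, S₂)`. The weight `𝟙{A=a} / (e_a(X) r₃)` is `𝒢`-measurable
and sequential missingness gives `E[R₃ Y | 𝒢] = r₃ E[Y | 𝒢]`, so `r₃` cancels and, by consistency,
the integrand may be replaced by `E[𝟙{A=a} Y(a) | 𝒢] / e_a(X)`. Conditioning further on `σ(X)`,
unconfoundedness gives `E[𝟙{A=a} Y(a) | X] = e_a(X) E[Y(a) | X]`, so `e_a(X)` cancels as well and
what remains integrates to `E[Y(a)]`. Both factorisations of conditional expectations come from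
conditional independence read pointwise on the conditional expectation kernel, where it is
ordinary independence.
-/

open MeasureTheory ProbabilityTheory MeasurableSpace Set

lemma integrable_select_of_forall_integrable {Ω ι : Type*} [MeasurableSpace Ω] [Fintype ι]
    {μ : Measure Ω} {Y : ι → Ω → ℝ} (hY : ∀ i, Integrable (Y i) μ) {A : Ω → ι}
    (hmeas : AEStronglyMeasurable (fun ω => Y (A ω) ω) μ) :
    Integrable (fun ω => Y (A ω) ω) μ :=
  (integrable_finsetSum Finset.univ fun i _ => (hY i).norm).mono' hmeas <|
    ae_of_all _ fun ω => by
      simpa only [Finset.sum_apply] using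
        Finset.single_le_sum (f := fun i => ‖Y i ω‖) (fun i _ => norm_nonneg _)
          (Finset.mem_univ (A ω))

lemma MeasureTheory.Integrable.indicator_one_mul {Ω : Type*} [MeasurableSpace Ω] {μ : Measure Ω}
    {f : Ω → ℝ} (hf : Integrable f μ) {s : Set Ω} (hs : MeasurableSet s) :
    Integrable (fun ω => s.indicator (fun _ => (1 : ℝ)) ω * f ω) μ := by
  simpa only [← indicator_mul_left, one_mul] using hf.indicator hs

lemma indepFun_indicator_of_measure_inter_preimage_Iic_rat
    {Ω : Type*} [MeasurableSpace Ω] {ν : Measure Ω} [IsProbabilityMeasure ν]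
    {B : Set Ω} (hB : MeasurableSet B) {f : Ω → ℝ} (hf : Measurable f)
    (h : ∀ q : ℚ, ν (B ∩ f ⁻¹' Iic (q : ℝ)) = ν B * ν (f ⁻¹' Iic (q : ℝ))) :
    IndepFun (B.indicator fun _ => (1 : ℝ)) f ν := by
  refine Indep.indicator_indepFun 1 (measurableSet_generateFrom (mem_singleton B)) ?_
  have hcomap : MeasurableSpace.comap f inferInstance
      = generateFrom (preimage f '' ⋃ q : ℚ, {Iic (q : ℝ)}) := by
    rw [← comap_generateFrom, ← Real.borel_eq_generateFrom_Iic_rat]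
    rfl
  rw [hcomap]
  have hIic : ∀ t ∈ ⋃ q : ℚ, {Iic (q : ℝ)}, ∃ q : ℚ, Iic (q : ℝ) = t :=
    fun t ht => by simpa using ht
  refine IndepSets.indep' (by rintro s rfl; exact hB) ?_ (IsPiSystem.singleton B)
    (Real.isPiSystem_Iic_rat.comap f) ((IndepSets_iff _ _ _).2 ?_)
  · rintro s ⟨t, ht, rfl⟩
    obtain ⟨q, rfl⟩ := hIic t ht
    exact hf measurableSet_Iic
  · rintro s _ rfl ⟨t, ht, rfl⟩
    obtain ⟨q, rfl⟩ := hIic t ht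
    exact h q

/-- Conditional independence only yields an a.e. identity for each pair of sets; the countable
π-system of rational half-lines lets these be combined under almost every `condExpKernel μ m' ω`. -/
lemma ProbabilityTheory.CondIndep.ae_indepFun_indicator {Ω : Type*}
    {m' m₁ m₂ mΩ : MeasurableSpace Ω}
    [StandardBorelSpace Ω] {hm' : m' ≤ mΩ} {μ : Measure Ω} [IsFiniteMeasure μ]
    (hCI : CondIndep m' m₁ m₂ hm' μ) (hm₁ : m₁ ≤ mΩ) (hm₂ : m₂ ≤ mΩ)
    {B : Set Ω} (hB : MeasurableSet[m₁] B) {f : Ω → ℝ} (hf : Measurable[m₂] f) :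
    ∀ᵐ ω ∂μ, IndepFun (B.indicator fun _ => (1 : ℝ)) f (condExpKernel μ m' ω) := by
  have hfactor : ∀ᵐ ω ∂μ, ∀ q : ℚ, condExpKernel μ m' ω (B ∩ f ⁻¹' Iic (q : ℝ))
      = condExpKernel μ m' ω B * condExpKernel μ m' ω (f ⁻¹' Iic (q : ℝ)) :=
    ae_all_iff.2 fun q => ae_of_ae_trim hm' (hCI B _ hB (hf measurableSet_Iic))
  filter_upwards [hfactor] with ω hω
  exact indepFun_indicator_of_measure_inter_preimage_Iic_rat (hm₁ _ hB) (hf.mono hm₂ le_rfl) hω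

lemma condExp_indicator_mul_ae_eq_of_condIndep {Ω : Type*} {m' m₁ m₂ mΩ : MeasurableSpace Ω}
    [StandardBorelSpace Ω] {hm' : m' ≤ mΩ} {μ : Measure Ω} [IsFiniteMeasure μ]
    (hCI : CondIndep m' m₁ m₂ hm' μ) (hm₁ : m₁ ≤ mΩ) (hm₂ : m₂ ≤ mΩ)
    {B : Set Ω} (hB : MeasurableSet[m₁] B) {f : Ω → ℝ} (hf : Measurable[m₂] f)
    (hfi : Integrable f μ) :
    μ[fun ω => B.indicator (fun _ => (1 : ℝ)) ω * f ω | m'] =ᵐ[μ]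
      fun ω => (μ⟦B | m'⟧) ω * (μ[f | m']) ω := by
  have hBΩ : MeasurableSet B := hm₁ _ hB
  filter_upwards [condExp_ae_eq_integral_condExpKernel hm' (hfi.indicator_one_mul hBΩ),
    condExpKernel_ae_eq_condExp hm' hBΩ, condExp_ae_eq_integral_condExpKernel hm' hfi,
    hCI.ae_indepFun_indicator hm₁ hm₂ hB hf, hfi.condExpKernel_ae]
    with ω hBf_eq hB_eq hf_eq hindep hfiω
  rw [hBf_eq, ← hB_eq, hf_eq, ← integral_indicator_one hBΩ]
  exact hindep.integral_mul_eq_mul_integral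
    ((measurable_const.indicator hBΩ).aestronglyMeasurable) hfiω.aestronglyMeasurable

lemma condExp_mul_div_ae_eq {Ω : Type*} {m mΩ : MeasurableSpace Ω} {μ : Measure Ω}
    {h p F g : Ω → ℝ} (hh : StronglyMeasurable[m] h) (hp : StronglyMeasurable[m] p)
    (hp0 : ∀ᵐ ω ∂μ, p ω ≠ 0) (hF : μ[F | m] =ᵐ[μ] p * μ[g | m]) (hFi : Integrable F μ)
    (hi : Integrable (fun ω => h ω * F ω / p ω) μ) :
    μ[fun ω => h ω * F ω / p ω | m] =ᵐ[μ] h * μ[g | m] := by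
  have hrw : (fun ω => h ω * F ω / p ω) = (h / p) * F := by
    ext ω; simp only [Pi.mul_apply, Pi.div_apply]; ring
  rw [hrw] at hi ⊢
  filter_upwards [condExp_mul_of_stronglyMeasurable_left (hh.div hp) hi hFi, hF, hp0]
    with ω hpull hFω hpω
  simp only [hpull, Pi.mul_apply, Pi.div_apply, hFω]
  field_simp

theorem integral_indicator_mul_indicator_mul_div_eq {Ω : Type*} {mX 𝒢 mΩ : MeasurableSpace Ω}
    {μ : Measure Ω} [IsFiniteMeasure μ] (hX𝒢 : mX ≤ 𝒢) (h𝒢 : 𝒢 ≤ mΩ)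
    {BA BR : Set Ω} (hBA : MeasurableSet[𝒢] BA) (hBR : MeasurableSet BR)
    {Yo Ya : Ω → ℝ} (hYo : Integrable Yo μ) (hcons : ∀ ω ∈ BA, Yo ω = Ya ω)
    {e r : Ω → ℝ} (he : StronglyMeasurable[mX] e) (hr : StronglyMeasurable[𝒢] r)
    (he0 : ∀ᵐ ω ∂μ, e ω ≠ 0) (hr0 : ∀ᵐ ω ∂μ, r ω ≠ 0)
    (hR_fac : μ[fun ω => BR.indicator (fun _ => (1 : ℝ)) ω * Yo ω | 𝒢] =ᵐ[μ] r * μ[Yo | 𝒢])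
    (hA_fac : μ[fun ω => BA.indicator (fun _ => (1 : ℝ)) ω * Ya ω | mX] =ᵐ[μ] e * μ[Ya | mX])
    (hi : Integrable (fun ω => BA.indicator (fun _ => (1 : ℝ)) ω
      * BR.indicator (fun _ => (1 : ℝ)) ω * Yo ω / (e ω * r ω)) μ) :
    ∫ ω, BA.indicator (fun _ => (1 : ℝ)) ω * BR.indicator (fun _ => (1 : ℝ)) ω * Yo ω
        / (e ω * r ω) ∂μ = ∫ ω, Ya ω ∂μ := by
  set IA := BA.indicator fun _ => (1 : ℝ)
  set IR := BR.indicator fun _ => (1 : ℝ)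
  have hIA : StronglyMeasurable[𝒢] IA := stronglyMeasurable_const.indicator hBA
  have hIAYo : (fun ω => IA ω * Ya ω) = IA * Yo := by
    ext ω
    by_cases hω : ω ∈ BA
    · simp [IA, hω, hcons ω hω]
    · simp [IA, hω]
  have hcancel_r : μ[fun ω => (IA ω / e ω) * (IR ω * Yo ω) / r ω | 𝒢]
      =ᵐ[μ] (IA / e) * μ[Yo | 𝒢] :=
    condExp_mul_div_ae_eq (hIA.div (he.mono hX𝒢)) hr hr0 hR_fac (hYo.indicator_one_mul hBR)
      (by convert hi using 2; ring)
  have hpull : μ[fun ω => IA ω * Ya ω | 𝒢] =ᵐ[μ] IA * μ[Yo | 𝒢] := by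
    rw [hIAYo]
    exact condExp_mul_of_stronglyMeasurable_left hIA (hYo.indicator_one_mul (h𝒢 _ hBA)) hYo
  have hconsistency : (IA / e) * μ[Yo | 𝒢]
      =ᵐ[μ] fun ω => 1 * (μ[fun ω => IA ω * Ya ω | 𝒢]) ω / e ω := by
    filter_upwards [hpull] with ω hω
    simp only [Pi.mul_apply, Pi.div_apply, hω]
    ring
  have hcancel_e : μ[fun ω => 1 * (μ[fun ω => IA ω * Ya ω | 𝒢]) ω / e ω | mX]
      =ᵐ[μ] (fun _ => (1 : ℝ)) * μ[Ya | mX] :=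
    condExp_mul_div_ae_eq stronglyMeasurable_const he he0
      ((condExp_condExp_of_le hX𝒢 h𝒢).trans hA_fac) integrable_condExp
      ((integrable_condExp.congr hcancel_r).congr hconsistency)
  calc ∫ ω, IA ω * IR ω * Yo ω / (e ω * r ω) ∂μ
      = ∫ ω, (IA ω / e ω) * (IR ω * Yo ω) / r ω ∂μ := by congr 1; ext ω; ring
    _ = ∫ ω, 1 * (μ[fun ω => IA ω * Ya ω | 𝒢]) ω / e ω ∂μ := by
      rw [← integral_condExp h𝒢, integral_congr_ae (hcancel_r.trans hconsistency)]
    _ = ∫ ω, (μ[Ya | mX]) ω ∂μ := by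
      rw [← integral_condExp (hX𝒢.trans h𝒢), integral_congr_ae hcancel_e]
      simp only [Pi.mul_apply, one_mul]
    _ = ∫ ω, Ya ω ∂μ := integral_condExp (hX𝒢.trans h𝒢)

theorem stmt4_general
    {Ω 𝓧 : Type*} [mΩ : MeasurableSpace Ω] [StandardBorelSpace Ω]
    [m𝓧 : MeasurableSpace 𝓧]
    (P : Measure Ω) [IsProbabilityMeasure P]
    (X : Ω → 𝓧) (hX : Measurable X)
    (A : Ω → Bool) (hA : Measurable A)
    (S₁ S₂ Y : Bool → Ω → ℝ)
    (hS₁ : ∀ a, Measurable (S₁ a)) (hS₂ : ∀ a, Measurable (S₂ a))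
    (hYmeas : ∀ a, Measurable (Y a)) (hYint : ∀ a, Integrable (Y a) P)
    (S₁o S₂o Yo : Ω → ℝ)
    (hS₁o : Measurable S₁o) (hS₂o : Measurable S₂o) (hYo : Measurable Yo)
    (hconsY : Yo = fun ω => Y (A ω) ω)
    (R₃ : Ω → Bool) (hR₃ : Measurable R₃)
    -- fixed arm
    (a : Bool)
    -- unconfoundedness for arm a
    (hunconf : CondIndep (MeasurableSpace.comap X m𝓧)
      (MeasurableSpace.comap (fun ω => (S₁ a ω, S₂ a ω, Y a ω)) inferInstance)
      (MeasurableSpace.comap A inferInstance) hX.comap_le P)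
    -- sequential missingness of the long-term outcome
    (hseq3 : CondIndep
      (MeasurableSpace.comap X m𝓧 ⊔ MeasurableSpace.comap A inferInstance
        ⊔ MeasurableSpace.comap S₁o inferInstance ⊔ MeasurableSpace.comap S₂o inferInstance)
      (MeasurableSpace.comap R₃ inferInstance) (MeasurableSpace.comap Yo inferInstance)
      (sup_le (sup_le (sup_le hX.comap_le hA.comap_le) hS₁o.comap_le) hS₂o.comap_le) P)
    -- propensity score
    (e : 𝓧 → ℝ) (he : Measurable e)
    (heVer : (fun ω => e (X ω)) =ᵐ[P]
      P[({ω | A ω = a}).indicator (fun _ => (1 : ℝ)) | MeasurableSpace.comap X m𝓧])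
    (hePos : ∀ᵐ ω ∂P, 0 < e (X ω))
    -- selection score
    (r₃ : Ω → ℝ)
    (hr₃Meas : Measurable[MeasurableSpace.comap X m𝓧 ⊔ MeasurableSpace.comap A inferInstance
      ⊔ MeasurableSpace.comap S₁o inferInstance ⊔ MeasurableSpace.comap S₂o inferInstance] r₃)
    (hr₃Ver : r₃ =ᵐ[P] P[({ω | R₃ ω = true}).indicator (fun _ => (1 : ℝ)) |
      MeasurableSpace.comap X m𝓧 ⊔ MeasurableSpace.comap A inferInstance
        ⊔ MeasurableSpace.comap S₁o inferInstance ⊔ MeasurableSpace.comap S₂o inferInstance])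
    (hr₃Pos : ∀ᵐ ω ∂P, 0 < r₃ ω)
    -- integrability of the weighted outcome
    (hWint : Integrable (fun ω => ({ω' | A ω' = a}).indicator (fun _ => (1 : ℝ)) ω
      * ({ω' | R₃ ω' = true}).indicator (fun _ => (1 : ℝ)) ω * Yo ω / (e (X ω) * r₃ ω)) P) :
    ∫ ω, ({ω' | A ω' = a}).indicator (fun _ => (1 : ℝ)) ω
        * ({ω' | R₃ ω' = true}).indicator (fun _ => (1 : ℝ)) ω * Yo ω / (e (X ω) * r₃ ω) ∂P
      = ∫ ω, Y a ω ∂P := by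
  have h𝒢 := sup_le (sup_le (sup_le hX.comap_le hA.comap_le) hS₁o.comap_le) hS₂o.comap_le
  have hBA : MeasurableSet[MeasurableSpace.comap A inferInstance] {ω | A ω = a} :=
    ⟨{a}, trivial, rfl⟩
  have hBR : MeasurableSet[MeasurableSpace.comap R₃ inferInstance] {ω | R₃ ω = true} :=
    ⟨{true}, trivial, rfl⟩
  have hYo_int : Integrable Yo P := by
    subst hconsY; exact integrable_select_of_forall_integrable hYint hYo.aestronglyMeasurable
  have hYa : Measurable[MeasurableSpace.comap (fun ω => (S₁ a ω, S₂ a ω, Y a ω)) inferInstance]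
      (Y a) :=
    (measurable_snd.comp measurable_snd).comp (comap_measurable _)
  have htriple : Measurable fun ω => (S₁ a ω, S₂ a ω, Y a ω) :=
    (hS₁ a).prodMk ((hS₂ a).prodMk (hYmeas a))
  refine integral_indicator_mul_indicator_mul_div_eq
    (le_sup_left.trans (le_sup_left.trans le_sup_left)) h𝒢 ?_ (hR₃.comap_le _ hBR) hYo_int ?_
    (he.comp (comap_measurable X)).stronglyMeasurable hr₃Meas.stronglyMeasurable
    (hePos.mono fun _ h => h.ne') (hr₃Pos.mono fun _ h => h.ne') ?_ ?_ hWint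
  · exact Measurable.of_comap_le (le_sup_right.trans (le_sup_left.trans le_sup_left))
      (measurableSet_singleton a)
  · rintro ω (hω : A ω = a)
    simp only [hconsY, hω]
  · filter_upwards [condExp_indicator_mul_ae_eq_of_condIndep hseq3 hR₃.comap_le hYo.comap_le hBR
      (comap_measurable Yo) hYo_int, hr₃Ver] with ω hfactor hr₃ω
    rw [hfactor, ← hr₃ω]; rfl
  · filter_upwards [condExp_indicator_mul_ae_eq_of_condIndep hunconf.symm hA.comap_le
      htriple.comap_le hBA hYa (hYint a), heVer] with ω hfactor heω
    rw [hfactor, ← heω]; rfl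

/-- **Unconditional inverse probability weighting identity for the arm-wise long-term
mean.** Under consistency, unconfoundedness and sequential missingness, with a.s. positive
propensity and selection scores, `E[𝟙{A=a}·R₃·Y/(e_a(X)·r₃)] = E[Y(a)]`. -/
theorem stmt4
    {Ω 𝓧 : Type*} [mΩ : MeasurableSpace Ω] [StandardBorelSpace Ω] [Nonempty Ω]
    [m𝓧 : MeasurableSpace 𝓧] [StandardBorelSpace 𝓧]
    (P : Measure Ω) [IsProbabilityMeasure P]
    (X : Ω → 𝓧) (hX : Measurable X)
    (A : Ω → Bool) (hA : Measurable A)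
    (S₁ S₂ Y : Bool → Ω → ℝ)
    (hS₁ : ∀ a, Measurable (S₁ a)) (hS₂ : ∀ a, Measurable (S₂ a))
    (hYmeas : ∀ a, Measurable (Y a)) (hYint : ∀ a, Integrable (Y a) P)
    (S₁o S₂o Yo : Ω → ℝ)
    (hS₁o : Measurable S₁o) (hS₂o : Measurable S₂o) (hYo : Measurable Yo)
    (hcons₁ : S₁o = fun ω => S₁ (A ω) ω)
    (hcons₂ : S₂o = fun ω => S₂ (A ω) ω)
    (hconsY : Yo = fun ω => Y (A ω) ω)
    (R₃ : Ω → Bool) (hR₃ : Measurable R₃)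
    -- fixed arm
    (a : Bool)
    -- unconfoundedness for arm a
    (hunconf : CondIndep (MeasurableSpace.comap X m𝓧)
      (MeasurableSpace.comap (fun ω => (S₁ a ω, S₂ a ω, Y a ω)) inferInstance)
      (MeasurableSpace.comap A inferInstance) hX.comap_le P)
    -- sequential missingness of the long-term outcome
    (hseq3 : CondIndep
      (MeasurableSpace.comap X m𝓧 ⊔ MeasurableSpace.comap A inferInstance
        ⊔ MeasurableSpace.comap S₁o inferInstance ⊔ MeasurableSpace.comap S₂o inferInstance)
      (MeasurableSpace.comap R₃ inferInstance) (MeasurableSpace.comap Yo inferInstance)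
      (sup_le (sup_le (sup_le hX.comap_le hA.comap_le) hS₁o.comap_le) hS₂o.comap_le) P)
    -- propensity score
    (e : 𝓧 → ℝ) (he : Measurable e)
    (heVer : (fun ω => e (X ω)) =ᵐ[P]
      P[({ω | A ω = a}).indicator (fun _ => (1 : ℝ)) | MeasurableSpace.comap X m𝓧])
    (hePos : ∀ᵐ ω ∂P, 0 < e (X ω))
    -- selection score
    (r₃ : Ω → ℝ)
    (hr₃Meas : Measurable[MeasurableSpace.comap X m𝓧 ⊔ MeasurableSpace.comap A inferInstance
      ⊔ MeasurableSpace.comap S₁o inferInstance ⊔ MeasurableSpace.comap S₂o inferInstance] r₃)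
    (hr₃Ver : r₃ =ᵐ[P] P[({ω | R₃ ω = true}).indicator (fun _ => (1 : ℝ)) |
      MeasurableSpace.comap X m𝓧 ⊔ MeasurableSpace.comap A inferInstance
        ⊔ MeasurableSpace.comap S₁o inferInstance ⊔ MeasurableSpace.comap S₂o inferInstance])
    (hr₃Pos : ∀ᵐ ω ∂P, 0 < r₃ ω)
    -- integrability of the weighted outcome
    (hWint : Integrable (fun ω => ({ω' | A ω' = a}).indicator (fun _ => (1 : ℝ)) ω
      * ({ω' | R₃ ω' = true}).indicator (fun _ => (1 : ℝ)) ω * Yo ω / (e (X ω) * r₃ ω)) P) :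
    ∫ ω, ({ω' | A ω' = a}).indicator (fun _ => (1 : ℝ)) ω
        * ({ω' | R₃ ω' = true}).indicator (fun _ => (1 : ℝ)) ω * Yo ω / (e (X ω) * r₃ ω) ∂P
      = ∫ ω, Y a ω ∂P :=
  stmt4_general (mΩ := mΩ) (m𝓧 := m𝓧) P X hX A hA S₁ S₂ Y hS₁ hS₂ hYmeas hYint S₁o S₂o Yo hS₁o hS₂o
    hYo hconsY R₃ hR₃ a hunconf hseq3 e he heVer hePos r₃ hr₃Meas hr₃Ver hr₃Pos hWint
end

section
/- Factorization and identifiability of the selection score r₃ (Proposition 4.3). Assume R₃ ≤ R₂ ≤ R₁ pointwise (monotone missing); R₂ ⫫ S₂ | σ(X, A, S₁); R₁ ⫫ S₁ | σ(X, A); P(R₁=1) > 0 and P(R₂=1) > 0; and that the selection scores r₁ := P(R₁=1 | σ(X, A)) and r₂ := P(R₂=1 | σ(X, A, S₁)) are P-a.s. strictly positive. Let g₃ be any σ(X, A, S₁, S₂)-measurable version of P(R₃=1 | σ(X, A, S₁, S₂)) computed under the conditional measure P(·|{R₂=1}); let g₂ be any σ(X, A, S₁)-measurable version of P(R₂=1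 | σ(X, A, S₁)) computed under the conditional measure P(·|{R₁=1}); and let g₁ be any version of P(R₁=1 | σ(X, A)) under P. Then P(R₃=1 | σ(X, A, S₁, S₂)) = g₃ · g₂ · g₁ P-almost surely. -/
/-!
Two identities are each used twice. Bayes' rule: if `t ⊆ s` and `g` is a `𝒢`-measurable version
of `P(t | 𝒢)` computed under `P(· | s)`, then `P(t | 𝒢) = g · P(s | 𝒢)`, because by the pull-out
property `∫_G g · P(s | 𝒢) dP = ∫_G g 1_s dP = P(s) ∫_G g dP(· | s) = P(G ∩ t)` for `G ∈ 𝒢`.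
Conditional independence: if `σ(R) ⫫ σ(S) | 𝒢`, then `P(R = 1 | 𝒢 ∨ σ(S)) = P(R = 1 | 𝒢)`, which
only has to be checked on the π-system of intersections `G ∩ B` with `G ∈ 𝒢`, `B ∈ σ(S)`.
Bayes for `{R₃ = 1} ⊆ {R₂ = 1}`, independence to drop `S₂`, Bayes for `{R₂ = 1} ⊆ {R₁ = 1}` and
independence to drop `S₁` give `r₃ = g₃ · g₂ · r₁`.
-/

open MeasureTheory ProbabilityTheory

lemma Set.indicator_eq_mul_indicator_one_s6 {ι M₀ : Type*} [MulZeroOneClass M₀] (s : Set ι)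
    (f : ι → M₀) : s.indicator f = f * s.indicator (fun _ => 1) := by
  ext x; by_cases hx : x ∈ s <;> simp [hx]

section Cond

variable {Ω : Type*} {m m₀ : MeasurableSpace Ω} {μ : Measure Ω} [IsFiniteMeasure μ] {s : Set Ω}

lemma smul_cond_eq_restrict : μ s • μ[|s] = μ.restrict s := by
  rcases eq_or_ne (μ s) 0 with h | h
  · simp [h, Measure.restrict_eq_zero.mpr h]
  · rw [ProbabilityTheory.cond, smul_smul, ENNReal.mul_inv_cancel h (measure_ne_top μ s), one_smul]

lemma setIntegral_indicator_eq_smul_setIntegral_cond {E : Type*} [NormedAddCommGroup E]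
    [NormedSpace ℝ E] (hs : MeasurableSet[m₀] s) (t : Set Ω) (f : Ω → E) :
    ∫ x in t, s.indicator f x ∂μ = (μ s).toReal • ∫ x in t, f x ∂μ[|s] := by
  rw [← integral_smul_measure, ← Measure.restrict_smul, smul_cond_eq_restrict,
    integral_indicator hs, Measure.restrict_comm hs]

lemma MeasureTheory.Integrable.indicator_of_cond {E : Type*} [NormedAddCommGroup E]
    (hs : MeasurableSet[m₀] s) {f : Ω → E} (hf : Integrable f μ[|s]) :
    Integrable (s.indicator f) μ := by
  rw [integrable_indicator_iff hs, IntegrableOn, ← smul_cond_eq_restrict]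
  exact hf.smul_measure (measure_ne_top μ s)

theorem condExp_indicator_ae_eq_mul_condExp_cond (hm : m ≤ m₀) (hs : MeasurableSet[m₀] s)
    {f : Ω → ℝ} (hf : Integrable f μ[|s]) {g : Ω → ℝ} (hgm : StronglyMeasurable[m] g)
    (hg : g =ᵐ[μ[|s]] (μ[|s])[f | m]) :
    μ[s.indicator f | m] =ᵐ[μ] g * μ⟦s | m⟧ := by
  have hgs : Integrable (s.indicator g) μ :=
    (integrable_condExp.congr hg.symm).indicator_of_cond hs
  have hpull : μ[s.indicator g | m] =ᵐ[μ] g * μ⟦s | m⟧ := by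
    rw [Set.indicator_eq_mul_indicator_one_s6] at hgs ⊢
    exact condExp_mul_of_stronglyMeasurable_left hgm hgs ((integrable_const 1).indicator hs)
  refine (ae_eq_condExp_of_forall_setIntegral_eq hm (hf.indicator_of_cond hs)
    (fun _ _ _ => integrable_condExp.integrableOn) (fun t ht _ => ?_)
    stronglyMeasurable_condExp.aestronglyMeasurable).symm.trans hpull
  rw [setIntegral_condExp hm hgs ht, setIntegral_indicator_eq_smul_setIntegral_cond hs,
    setIntegral_indicator_eq_smul_setIntegral_cond hs,
    setIntegral_congr_ae (hm t ht) (hg.mono fun x hx _ => hx), setIntegral_condExp hm hf ht]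

theorem condExp_indicator_ae_eq_mul_of_subset (hm : m ≤ m₀) (hs : MeasurableSet[m₀] s)
    {t : Set Ω} (ht : MeasurableSet[m₀] t) (hts : t ⊆ s) {g : Ω → ℝ}
    (hgm : StronglyMeasurable[m] g) (hg : g =ᵐ[μ[|s]] (μ[|s])⟦t | m⟧) :
    μ⟦t | m⟧ =ᵐ[μ] g * μ⟦s | m⟧ := by
  have h := condExp_indicator_ae_eq_mul_condExp_cond hm hs
    ((integrable_const 1).indicator ht) hgm hg
  rwa [Set.indicator_indicator, Set.inter_eq_right.mpr hts] at h

end Cond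

section PiSystem

variable {Ω : Type*} {m₀ : MeasurableSpace Ω} {μ : Measure Ω}

lemma isPiSystem_image2_inter (m₁ m₂ : MeasurableSpace Ω) :
    IsPiSystem (Set.image2 (· ∩ ·) {s | MeasurableSet[m₁] s} {s | MeasurableSet[m₂] s}) := by
  rintro _ ⟨a₁, ha₁, b₁, hb₁, rfl⟩ _ ⟨a₂, ha₂, b₂, hb₂, rfl⟩ -
  exact ⟨a₁ ∩ a₂, ha₁.inter ha₂, b₁ ∩ b₂, hb₁.inter hb₂, Set.inter_inter_inter_comm ..⟩

lemma sup_eq_generateFrom_image2_inter (m₁ m₂ : MeasurableSpace Ω) :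
    m₁ ⊔ m₂ = MeasurableSpace.generateFrom
      (Set.image2 (· ∩ ·) {s | MeasurableSet[m₁] s} {s | MeasurableSet[m₂] s}) := by
  refine le_antisymm (sup_le (fun a ha => ?_) (fun b hb => ?_))
    (MeasurableSpace.generateFrom_le ?_)
  · exact MeasurableSpace.measurableSet_generateFrom
      ⟨a, ha, Set.univ, MeasurableSet.univ, Set.inter_univ a⟩
  · exact MeasurableSpace.measurableSet_generateFrom
      ⟨Set.univ, MeasurableSet.univ, b, hb, Set.univ_inter b⟩
  · rintro _ ⟨a, ha, b, hb, rfl⟩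
    exact (le_sup_left (a := m₁) a ha).inter (le_sup_right (b := m₂) b hb)

lemma setIntegral_eq_of_isPiSystem {E : Type*} [NormedAddCommGroup E] [NormedSpace ℝ E]
    {m : MeasurableSpace Ω} {p : Set (Set Ω)} (hm : m ≤ m₀)
    (h_gen : m = MeasurableSpace.generateFrom p) (hp : IsPiSystem p) {f g : Ω → E}
    (hf : Integrable f μ) (hg : Integrable g μ) (h_univ : ∫ x, f x ∂μ = ∫ x, g x ∂μ)
    (h_basic : ∀ t ∈ p, ∫ x in t, f x ∂μ = ∫ x in t, g x ∂μ) {t : Set Ω}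
    (ht : MeasurableSet[m] t) : ∫ x in t, f x ∂μ = ∫ x in t, g x ∂μ := by
  induction t, ht using MeasurableSpace.induction_on_inter h_gen hp with
  | empty => simp
  | basic t ht => exact h_basic t ht
  | compl t ht ih =>
    rw [setIntegral_compl (hm t ht) hf, setIntegral_compl (hm t ht) hg, h_univ, ih]
  | iUnion u hdisj hu ih =>
    rw [integral_iUnion (fun i => hm _ (hu i)) hdisj hf.integrableOn,
      integral_iUnion (fun i => hm _ (hu i)) hdisj hg.integrableOn]
    exact tsum_congr ih

end PiSystem

theorem condExp_indicator_sup_ae_eq_of_condIndep {Ω : Type*}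
    {m' m₁ m₂ m₀ : MeasurableSpace Ω} [StandardBorelSpace Ω] {μ : Measure Ω} [IsFiniteMeasure μ]
    (hm' : m' ≤ m₀) (hm₁ : m₁ ≤ m₀) (hm₂ : m₂ ≤ m₀) (h : CondIndep m' m₁ m₂ hm' μ) {s : Set Ω}
    (hs : MeasurableSet[m₁] s) :
    μ⟦s | m' ⊔ m₂⟧ =ᵐ[μ] μ⟦s | m'⟧ := by
  have hsup : m' ⊔ m₂ ≤ m₀ := sup_le hm' hm₂
  have hs₀ : MeasurableSet s := hm₁ s hs
  have hint : Integrable (s.indicator fun _ => (1 : ℝ)) μ := (integrable_const 1).indicator hs₀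
  refine (ae_eq_condExp_of_forall_setIntegral_eq hsup hint
    (fun _ _ _ => integrable_condExp.integrableOn) (fun t ht _ => ?_)
    (stronglyMeasurable_condExp.mono (le_sup_left : m' ≤ m' ⊔ m₂)).aestronglyMeasurable).symm
  refine setIntegral_eq_of_isPiSystem hsup (sup_eq_generateFrom_image2_inter m' m₂)
    (isPiSystem_image2_inter m' m₂) integrable_condExp hint (integral_condExp hm') ?_ ht
  rintro _ ⟨a, ha, b, hb, rfl⟩
  have hb₀ : MeasurableSet b := hm₂ b hb
  have hint_b : Integrable (b.indicator (μ⟦s | m'⟧)) μ := integrable_condExp.indicator hb₀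
  have hpull : μ[b.indicator (μ⟦s | m'⟧) | m'] =ᵐ[μ] μ⟦s ∩ b | m'⟧ := by
    rw [Set.indicator_eq_mul_indicator_one_s6] at hint_b ⊢
    exact (condExp_mul_of_stronglyMeasurable_left stronglyMeasurable_condExp hint_b
      ((integrable_const 1).indicator hb₀)).trans
      ((condIndep_iff _ _ _ hm' hm₁ hm₂ μ).mp h s b hs hb).symm
  calc ∫ x in a ∩ b, (μ⟦s | m'⟧) x ∂μ
      = ∫ x in a, μ[b.indicator (μ⟦s | m'⟧) | m'] x ∂μ := by
        rw [setIntegral_condExp hm' hint_b ha, setIntegral_indicator hb₀]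
    _ = ∫ x in a, (s ∩ b).indicator (fun _ => (1 : ℝ)) x ∂μ := by
        rw [setIntegral_congr_ae (hm' a ha) (hpull.mono fun x hx _ => hx),
          setIntegral_condExp hm' ((integrable_const 1).indicator (hs₀.inter hb₀)) ha]
    _ = ∫ x in a ∩ b, s.indicator (fun _ => (1 : ℝ)) x ∂μ := by
        rw [Set.inter_comm s b, ← Set.indicator_indicator, setIntegral_indicator hb₀]

lemma measurableSet_comap_eq_true {Ω : Type*} (R : Ω → Bool) :
    MeasurableSet[MeasurableSpace.comap R inferInstance] {ω | R ω = true} :=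
  ⟨{true}, measurableSet_singleton true, rfl⟩

theorem stmt6_general
    {Ω 𝓧 : Type*} [mΩ : MeasurableSpace Ω] [StandardBorelSpace Ω]
    [m𝓧 : MeasurableSpace 𝓧]
    (P : Measure Ω) [IsProbabilityMeasure P]
    (X : Ω → 𝓧) (hX : Measurable X)
    (A : Ω → Bool) (hA : Measurable A)
    (S₁ S₂ : Ω → ℝ) (hS₁ : Measurable S₁) (hS₂ : Measurable S₂)
    (R₁ R₂ R₃ : Ω → Bool)
    (hR₁ : Measurable R₁) (hR₂ : Measurable R₂) (hR₃ : Measurable R₃)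
    -- monotone missing
    (hmono32 : ∀ ω, R₃ ω = true → R₂ ω = true)
    (hmono21 : ∀ ω, R₂ ω = true → R₁ ω = true)
    -- sequential missing of the short-term outcomes
    (hseq2 : CondIndep
      (MeasurableSpace.comap X m𝓧 ⊔ MeasurableSpace.comap A inferInstance
        ⊔ MeasurableSpace.comap S₁ inferInstance)
      (MeasurableSpace.comap R₂ inferInstance) (MeasurableSpace.comap S₂ inferInstance)
      (sup_le (sup_le hX.comap_le hA.comap_le) hS₁.comap_le) P)
    (hseq1 : CondIndep (MeasurableSpace.comap X m𝓧 ⊔ MeasurableSpace.comap A inferInstance)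
      (MeasurableSpace.comap R₁ inferInstance) (MeasurableSpace.comap S₁ inferInstance)
      (sup_le hX.comap_le hA.comap_le) P)
    -- g₃ : σ(X,A,S₁,S₂)-measurable version of P(R₃=1 | σ(X,A,S₁,S₂)) under P(·|{R₂=1})
    (g₃ : Ω → ℝ)
    (hg₃Meas : Measurable[MeasurableSpace.comap X m𝓧 ⊔ MeasurableSpace.comap A inferInstance
      ⊔ MeasurableSpace.comap S₁ inferInstance ⊔ MeasurableSpace.comap S₂ inferInstance] g₃)
    (hg₃Ver : g₃ =ᵐ[P[|{ω | R₂ ω = true}]]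
      (P[|{ω | R₂ ω = true}])[({ω' | R₃ ω' = true}).indicator (fun _ => (1 : ℝ)) |
        MeasurableSpace.comap X m𝓧 ⊔ MeasurableSpace.comap A inferInstance
          ⊔ MeasurableSpace.comap S₁ inferInstance ⊔ MeasurableSpace.comap S₂ inferInstance])
    -- g₂ : σ(X,A,S₁)-measurable version of P(R₂=1 | σ(X,A,S₁)) under P(·|{R₁=1})
    (g₂ : Ω → ℝ)
    (hg₂Meas : Measurable[MeasurableSpace.comap X m𝓧 ⊔ MeasurableSpace.comap A inferInstance
      ⊔ MeasurableSpace.comap S₁ inferInstance] g₂)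
    (hg₂Ver : g₂ =ᵐ[P[|{ω | R₁ ω = true}]]
      (P[|{ω | R₁ ω = true}])[({ω' | R₂ ω' = true}).indicator (fun _ => (1 : ℝ)) |
        MeasurableSpace.comap X m𝓧 ⊔ MeasurableSpace.comap A inferInstance
          ⊔ MeasurableSpace.comap S₁ inferInstance])
    -- g₁ : any version of P(R₁=1 | σ(X,A)) under P
    (g₁ : Ω → ℝ)
    (hg₁Ver : g₁ =ᵐ[P] P[({ω' | R₁ ω' = true}).indicator (fun _ => (1 : ℝ)) |
      MeasurableSpace.comap X m𝓧 ⊔ MeasurableSpace.comap A inferInstance]) :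
    P[({ω' | R₃ ω' = true}).indicator (fun _ => (1 : ℝ)) |
      MeasurableSpace.comap X m𝓧 ⊔ MeasurableSpace.comap A inferInstance
        ⊔ MeasurableSpace.comap S₁ inferInstance ⊔ MeasurableSpace.comap S₂ inferInstance]
      =ᵐ[P] fun ω => g₃ ω * g₂ ω * g₁ ω := by
  have hXA := sup_le hX.comap_le hA.comap_le
  have hXAS₁ := sup_le hXA hS₁.comap_le
  have hmeas (R : Ω → Bool) (hR : Measurable R) : MeasurableSet {ω | R ω = true} :=
    hR.comap_le _ (measurableSet_comap_eq_true R)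
  filter_upwards [
    condExp_indicator_ae_eq_mul_of_subset (sup_le hXAS₁ hS₂.comap_le) (hmeas R₂ hR₂) (hmeas R₃ hR₃)
      hmono32 hg₃Meas.stronglyMeasurable hg₃Ver,
    condExp_indicator_sup_ae_eq_of_condIndep hXAS₁ hR₂.comap_le hS₂.comap_le hseq2
      (measurableSet_comap_eq_true R₂),
    condExp_indicator_ae_eq_mul_of_subset hXAS₁ (hmeas R₁ hR₁) (hmeas R₂ hR₂)
      hmono21 hg₂Meas.stronglyMeasurable hg₂Ver,
    condExp_indicator_sup_ae_eq_of_condIndep hXA hR₁.comap_le hS₁.comap_le hseq1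
      (measurableSet_comap_eq_true R₁),
    hg₁Ver] with ω h₃ h₂ h₂' h₁ hg₁
  rw [Pi.mul_apply] at h₃ h₂'
  rw [h₃, h₂, h₂', h₁, hg₁]
  ring

/-- **Factorization and identifiability of the selection score `r₃` (Proposition 4.3).**
Under monotone missing and the sequential missing mechanism, the selection score
`P(R₃=1 | σ(X,A,S₁,S₂))` factors `P`-a.s. as `g₃ · g₂ · g₁`, where `g₃` is any
`σ(X,A,S₁,S₂)`-measurable version of `P(R₃=1 | σ(X,A,S₁,S₂))` under `P(·|{R₂=1})`, `g₂` is
any `σ(X,A,S₁)`-measurable version of `P(R₂=1 | σ(X,A,S₁))` under `P(·|{R₁=1})`, and `g₁`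
is any version of `P(R₁=1 | σ(X,A))` under `P`. -/
theorem stmt6
    {Ω 𝓧 : Type*} [mΩ : MeasurableSpace Ω] [StandardBorelSpace Ω] [Nonempty Ω]
    [m𝓧 : MeasurableSpace 𝓧] [StandardBorelSpace 𝓧]
    (P : Measure Ω) [IsProbabilityMeasure P]
    (X : Ω → 𝓧) (hX : Measurable X)
    (A : Ω → Bool) (hA : Measurable A)
    (S₁ S₂ : Ω → ℝ) (hS₁ : Measurable S₁) (hS₂ : Measurable S₂)
    (R₁ R₂ R₃ : Ω → Bool)
    (hR₁ : Measurable R₁) (hR₂ : Measurable R₂) (hR₃ : Measurable R₃)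
    -- monotone missing
    (hmono32 : ∀ ω, R₃ ω = true → R₂ ω = true)
    (hmono21 : ∀ ω, R₂ ω = true → R₁ ω = true)
    -- sequential missing of the short-term outcomes
    (hseq2 : CondIndep
      (MeasurableSpace.comap X m𝓧 ⊔ MeasurableSpace.comap A inferInstance
        ⊔ MeasurableSpace.comap S₁ inferInstance)
      (MeasurableSpace.comap R₂ inferInstance) (MeasurableSpace.comap S₂ inferInstance)
      (sup_le (sup_le hX.comap_le hA.comap_le) hS₁.comap_le) P)
    (hseq1 : CondIndep (MeasurableSpace.comap X m𝓧 ⊔ MeasurableSpace.comap A inferInstance)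
      (MeasurableSpace.comap R₁ inferInstance) (MeasurableSpace.comap S₁ inferInstance)
      (sup_le hX.comap_le hA.comap_le) P)
    -- positive probability of observation at the first two stages
    (hR₁pos : 0 < P {ω | R₁ ω = true})
    (hR₂pos : 0 < P {ω | R₂ ω = true})
    -- a.s. positivity of the selection scores r₁ and r₂
    (hr₁pos : ∀ᵐ ω ∂P, 0 < (P[({ω' | R₁ ω' = true}).indicator (fun _ => (1 : ℝ)) |
      MeasurableSpace.comap X m𝓧 ⊔ MeasurableSpace.comap A inferInstance]) ω)
    (hr₂pos : ∀ᵐ ω ∂P, 0 < (P[({ω' | R₂ ω' = true}).indicator (fun _ => (1 : ℝ)) |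
      MeasurableSpace.comap X m𝓧 ⊔ MeasurableSpace.comap A inferInstance
        ⊔ MeasurableSpace.comap S₁ inferInstance]) ω)
    -- g₃ : σ(X,A,S₁,S₂)-measurable version of P(R₃=1 | σ(X,A,S₁,S₂)) under P(·|{R₂=1})
    (g₃ : Ω → ℝ)
    (hg₃Meas : Measurable[MeasurableSpace.comap X m𝓧 ⊔ MeasurableSpace.comap A inferInstance
      ⊔ MeasurableSpace.comap S₁ inferInstance ⊔ MeasurableSpace.comap S₂ inferInstance] g₃)
    (hg₃Ver : g₃ =ᵐ[P[|{ω | R₂ ω = true}]]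
      (P[|{ω | R₂ ω = true}])[({ω' | R₃ ω' = true}).indicator (fun _ => (1 : ℝ)) |
        MeasurableSpace.comap X m𝓧 ⊔ MeasurableSpace.comap A inferInstance
          ⊔ MeasurableSpace.comap S₁ inferInstance ⊔ MeasurableSpace.comap S₂ inferInstance])
    -- g₂ : σ(X,A,S₁)-measurable version of P(R₂=1 | σ(X,A,S₁)) under P(·|{R₁=1})
    (g₂ : Ω → ℝ)
    (hg₂Meas : Measurable[MeasurableSpace.comap X m𝓧 ⊔ MeasurableSpace.comap A inferInstance
      ⊔ MeasurableSpace.comap S₁ inferInstance] g₂)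
    (hg₂Ver : g₂ =ᵐ[P[|{ω | R₁ ω = true}]]
      (P[|{ω | R₁ ω = true}])[({ω' | R₂ ω' = true}).indicator (fun _ => (1 : ℝ)) |
        MeasurableSpace.comap X m𝓧 ⊔ MeasurableSpace.comap A inferInstance
          ⊔ MeasurableSpace.comap S₁ inferInstance])
    -- g₁ : any version of P(R₁=1 | σ(X,A)) under P
    (g₁ : Ω → ℝ)
    (hg₁Ver : g₁ =ᵐ[P] P[({ω' | R₁ ω' = true}).indicator (fun _ => (1 : ℝ)) |
      MeasurableSpace.comap X m𝓧 ⊔ MeasurableSpace.comap A inferInstance]) :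
    P[({ω' | R₃ ω' = true}).indicator (fun _ => (1 : ℝ)) |
      MeasurableSpace.comap X m𝓧 ⊔ MeasurableSpace.comap A inferInstance
        ⊔ MeasurableSpace.comap S₁ inferInstance ⊔ MeasurableSpace.comap S₂ inferInstance]
      =ᵐ[P] fun ω => g₃ ω * g₂ ω * g₁ ω :=
  stmt6_general (mΩ := mΩ) (m𝓧 := m𝓧) P X hX A hA S₁ S₂ hS₁ hS₂ R₁ R₂ R₃ hR₁ hR₂ hR₃ hmono32 hmono21
    hseq2 hseq1 g₃ hg₃Meas hg₃Ver g₂ hg₂Meas hg₂Ver g₁ hg₁Ver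
end

section
/- Inverse selection-score reweighting recovers the full conditional mean (key step in the proof of Eq. (2)). Let (Ω, 𝒜, P) be a probability space with Ω a standard Borel space, 𝒢 ⊆ 𝒜 a sub-σ-algebra, Z : Ω → ℝ a P-integrable random variable, and R : Ω → {0,1} measurable. Assume σ(Z) and σ(R) are conditionally independent given 𝒢, let r be a 𝒢-measurable random variable that is a version of E[𝟙{R=1} | 𝒢] with r > 0 P-a.s., and assume 𝟙{R=1} · Z / r is P-integrable. Then E[ 𝟙{R=1} · Z / r | 𝒢 ] = E[Z | 𝒢] P-almost surely. -/
/-!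
Conditional independence makes the law of `(𝟙{R=1}, Z)` under the regular conditional
distribution given `𝒢` a product measure almost surely, so `E[𝟙{R=1} Z | 𝒢] = r · E[Z | 𝒢]`.
Since `r` is `𝒢`-measurable it can be pulled out of the conditional expectation, and
dividing by `r > 0` gives the claim.
-/

open MeasureTheory ProbabilityTheory

theorem condExp_mul_ae_eq_of_condIndepFun {Ω : Type*} {m' mΩ : MeasurableSpace Ω}
    [StandardBorelSpace Ω] {hm' : m' ≤ mΩ} {μ : Measure Ω} [IsFiniteMeasure μ]
    {f g : Ω → ℝ} (hf : Measurable f) (hg : Measurable g) (hfg : CondIndepFun m' hm' f g μ)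
    (hf_int : Integrable f μ) (hg_int : Integrable g μ) (hfg_int : Integrable (f * g) μ) :
    μ[f * g | m'] =ᵐ[μ] μ[f | m'] * μ[g | m'] := by
  have hfactor := ae_of_ae_trim hm' ((condIndepFun_iff_map_prod_eq_prod_map_map hf hg).1 hfg)
  filter_upwards [hfactor, condExp_ae_eq_integral_condExpKernel hm' hfg_int,
    condExp_ae_eq_integral_condExpKernel hm' hf_int,
    condExp_ae_eq_integral_condExpKernel hm' hg_int] with ω hω hfg_eq hf_eq hg_eq
  set κ := condExpKernel μ m'
  rw [Pi.mul_apply, hfg_eq, hf_eq, hg_eq]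
  calc ∫ y, (f * g) y ∂κ ω
      = ∫ p, p.1 * p.2 ∂(κ.map fun y => (f y, g y)) ω := by
        rw [Kernel.map_apply _ (hf.prodMk hg),
          integral_map (hf.prodMk hg).aemeasurable (by fun_prop)]
        rfl
    _ = ∫ p, p.1 * p.2 ∂((κ ω).map f).prod ((κ ω).map g) := by
        rw [hω, Kernel.prod_apply, Kernel.map_apply _ hf, Kernel.map_apply _ hg]
    _ = (∫ y, f y ∂κ ω) * ∫ y, g y ∂κ ω := by
        rw [← integral_map (f := fun x => x) hf.aemeasurable aestronglyMeasurable_id,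
          ← integral_map (f := fun x => x) hg.aemeasurable aestronglyMeasurable_id]
        exact integral_prod_mul (fun x => x) fun y => y

theorem stmt10_general
    {Ω : Type*} [mΩ : MeasurableSpace Ω] [StandardBorelSpace Ω]
    (P : Measure Ω) [IsProbabilityMeasure P]
    (𝒢 : MeasurableSpace Ω) (h𝒢 : 𝒢 ≤ mΩ)
    (Z : Ω → ℝ) (hZ : Measurable[mΩ] Z) (hZint : Integrable Z P)
    (R : Ω → Bool) (hR : Measurable[mΩ] R)
    (hCI : CondIndep 𝒢 (MeasurableSpace.comap Z inferInstance)
      (MeasurableSpace.comap R inferInstance) h𝒢 P)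
    (r : Ω → ℝ) (hrMeas : Measurable[𝒢] r)
    (hrVer : r =ᵐ[P] P[({ω | R ω = true}).indicator (fun _ => (1 : ℝ)) | 𝒢])
    (hrPos : ∀ᵐ ω ∂P, 0 < r ω)
    (hWint : Integrable
      (fun ω => ({ω' | R ω' = true}).indicator (fun _ => (1 : ℝ)) ω * Z ω / r ω) P) :
    P[fun ω => ({ω' | R ω' = true}).indicator (fun _ => (1 : ℝ)) ω * Z ω / r ω | 𝒢]
      =ᵐ[P] P[Z | 𝒢] := by
  set B := {ω | R ω = true}
  set χ := B.indicator fun _ => (1 : ℝ)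
  have hB_R : MeasurableSet[MeasurableSpace.comap R inferInstance] B := ⟨{true}, trivial, rfl⟩
  have hB : MeasurableSet[mΩ] B := hR.comap_le B hB_R
  have hχ : Measurable[MeasurableSpace.comap R inferInstance] χ := measurable_const.indicator hB_R
  have hindep : CondIndepFun 𝒢 h𝒢 χ Z P :=
    (condIndepFun_iff_condIndep 𝒢 h𝒢 χ Z P).2
      (condIndep_of_condIndep_of_le_right hCI hχ.comap_le).symm
  have hχZ_int : Integrable (χ * Z) P :=
    (hZint.indicator hB).congr (ae_of_all _ fun ω => by simp [χ, Set.indicator_apply])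
  have hW : (fun ω => χ ω * Z ω / r ω) = (fun ω => (r ω)⁻¹) * (χ * Z) :=
    funext fun ω => div_eq_inv_mul _ _
  calc P[fun ω => χ ω * Z ω / r ω | 𝒢]
      = P[(fun ω => (r ω)⁻¹) * (χ * Z) | 𝒢] := by rw [hW]
    _ =ᵐ[P] (fun ω => (r ω)⁻¹) * P[χ * Z | 𝒢] :=
        condExp_mul_of_stronglyMeasurable_left hrMeas.inv.stronglyMeasurable (hW ▸ hWint) hχZ_int
    _ =ᵐ[P] P[Z | 𝒢] := by
        filter_upwards [condExp_mul_ae_eq_of_condIndepFun (hχ.mono hR.comap_le le_rfl) hZ hindep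
          ((integrable_const 1).indicator hB) hZint hχZ_int, hrVer, hrPos] with ω hprod hr hr_pos
        rw [Pi.mul_apply, hprod, Pi.mul_apply, ← hr, inv_mul_cancel_left₀ hr_pos.ne']

/-- **Inverse selection-score reweighting recovers the full conditional mean.**
If `σ(Z)` and `σ(R)` are conditionally independent given `𝒢`, `r` is a `𝒢`-measurable
a.s.-positive version of `E[𝟙{R=1} | 𝒢]`, and `𝟙{R=1}·Z/r` is integrable, then
`E[𝟙{R=1}·Z/r | 𝒢] = E[Z | 𝒢]` `P`-a.s. -/
theorem stmt10
    {Ω : Type*} [mΩ : MeasurableSpace Ω] [StandardBorelSpace Ω] [Nonempty Ω]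
    (P : Measure Ω) [IsProbabilityMeasure P]
    (𝒢 : MeasurableSpace Ω) (h𝒢 : 𝒢 ≤ mΩ)
    (Z : Ω → ℝ) (hZ : Measurable[mΩ] Z) (hZint : Integrable Z P)
    (R : Ω → Bool) (hR : Measurable[mΩ] R)
    (hCI : CondIndep 𝒢 (MeasurableSpace.comap Z inferInstance)
      (MeasurableSpace.comap R inferInstance) h𝒢 P)
    (r : Ω → ℝ) (hrMeas : Measurable[𝒢] r)
    (hrVer : r =ᵐ[P] P[({ω | R ω = true}).indicator (fun _ => (1 : ℝ)) | 𝒢])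
    (hrPos : ∀ᵐ ω ∂P, 0 < r ω)
    (hWint : Integrable
      (fun ω => ({ω' | R ω' = true}).indicator (fun _ => (1 : ℝ)) ω * Z ω / r ω) P) :
    P[fun ω => ({ω' | R ω' = true}).indicator (fun _ => (1 : ℝ)) ω * Z ω / r ω | 𝒢]
      =ᵐ[P] P[Z | 𝒢] :=
  stmt10_general (mΩ := mΩ) P 𝒢 h𝒢 Z hZ hZint R hR hCI r hrMeas hrVer hrPos hWint
end

section
/- Let (Ω, 𝒜, P) be a probability space with Ω a standard Borel space, 𝒢 ⊆ 𝒜 a sub-σ-algebra, A : Ω → {0,1} measurable with 0 < P(A=1) < 1, and Z : Ω → E₁, R : Ω → E₂ measurable maps into standard Borel spaces. Then σ(Z) and σ(R) are conditionally independent given 𝒢 ∨ σ(A) under P if and only if, for each a ∈ {0,1}, σ(Z) and σ(R) are conditionally independent given 𝒢 under the conditional measure P(·|{A=a}). -/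
open MeasureTheory ProbabilityTheory

lemma aux_sup_comap_bool {Ω : Type*} (𝒢 : MeasurableSpace Ω) (A : Ω → Bool) {S : Set Ω}
    (hS : MeasurableSet[𝒢 ⊔ MeasurableSpace.comap A inferInstance] S) :
    ∃ B₁ B₂, MeasurableSet[𝒢] B₁ ∧ MeasurableSet[𝒢] B₂ ∧
      S = (B₁ ∩ {ω | A ω = true}) ∪ (B₂ ∩ {ω | A ω = true}ᶜ) := by
  set T : Set Ω := {ω | A ω = true} with hT
  let m'' : MeasurableSpace Ω :=
    { MeasurableSet' := fun S => ∃ B₁ B₂, MeasurableSet[𝒢] B₁ ∧ MeasurableSet[𝒢] B₂ ∧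
        S = (B₁ ∩ T) ∪ (B₂ ∩ Tᶜ)
      measurableSet_empty := ⟨∅, ∅, MeasurableSet.empty, MeasurableSet.empty, by simp⟩
      measurableSet_compl := by
        rintro S ⟨B₁, B₂, h₁, h₂, rfl⟩
        refine ⟨B₁ᶜ, B₂ᶜ, h₁.compl, h₂.compl, ?_⟩
        ext x
        by_cases hx : x ∈ T <;> simp [hx]
      measurableSet_iUnion := by
        intro f hf
        choose B₁ B₂ h₁ h₂ hEq using hf
        refine ⟨⋃ i, B₁ i, ⋃ i, B₂ i, MeasurableSet.iUnion h₁, MeasurableSet.iUnion h₂, ?_⟩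
        simp_rw [hEq]
        ext x
        by_cases hx : x ∈ T <;> simp [hx] }
  have h1 : 𝒢 ≤ m'' := fun B hB => ⟨B, B, hB, hB, (Set.inter_union_compl B T).symm⟩
  have h2 : MeasurableSpace.comap A inferInstance ≤ m'' := by
    classical
    rintro S ⟨s, -, rfl⟩
    refine ⟨if true ∈ s then Set.univ else ∅, if false ∈ s then Set.univ else ∅,
      by split <;> simp, by split <;> simp, ?_⟩
    ext x
    rcases Bool.dichotomy (A x) with h | h <;>
      by_cases hs : true ∈ s <;> by_cases hs' : false ∈ s <;>
      simp [hT, h, hs, hs']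
  exact sup_le h1 h2 S hS

lemma aux_ae_of_cond {Ω : Type*} {mΩ : MeasurableSpace Ω} (P : Measure Ω) [IsFiniteMeasure P]
    {T : Set Ω} (hT : MeasurableSet T)
    {p : Ω → Prop} (h1 : ∀ᵐ ω ∂P[|T], p ω) (h2 : ∀ᵐ ω ∂P[|Tᶜ], p ω) :
    ∀ᵐ ω ∂P, p ω := by
  have key : ∀ {s : Set Ω}, MeasurableSet s → (∀ᵐ ω ∂P[|s], p ω) → P ({a | ¬ p a} ∩ s) = 0 := by
    intro s hs h0
    rcases eq_or_ne (P s) 0 with h | h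
    · exact measure_mono_null Set.inter_subset_right h
    · rw [ae_iff, cond_apply hs P] at h0
      rcases mul_eq_zero.1 h0 with h' | h'
      · exact absurd (ENNReal.inv_eq_zero.1 h') (measure_ne_top P s)
      · rwa [Set.inter_comm] at h'
  rw [ae_iff]
  refine le_antisymm ?_ (zero_le)
  calc P {a | ¬p a} = P (({a | ¬p a} ∩ T) ∪ ({a | ¬p a} ∩ Tᶜ)) := by
        rw [Set.inter_union_compl]
    _ ≤ P ({a | ¬p a} ∩ T) + P ({a | ¬p a} ∩ Tᶜ) := measure_union_le _ _
    _ = 0 := by rw [key hT h1, key hT.compl h2, add_zero]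

lemma aux_indicator_integrable {Ω : Type*} [mΩ : MeasurableSpace Ω] (P : Measure Ω)
    [IsFiniteMeasure P] {t : Set Ω} (ht : MeasurableSet t) :
    Integrable (t.indicator (fun _ => (1:ℝ))) P :=
  (integrable_indicator_iff ht).2 (integrable_const 1).integrableOn

lemma aux_condexp_cond {Ω : Type*} (𝒢 : MeasurableSpace Ω) [mΩ : MeasurableSpace Ω]
    (P : Measure Ω) [IsProbabilityMeasure P]
    (h𝒢 : 𝒢 ≤ mΩ) {A : Ω → Bool} (hA : Measurable[mΩ] A)
    (h0 : ∀ b : Bool, P {ω | A ω = b} ≠ 0)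
    {f : Ω → ℝ} (hf : Integrable f P) (a : Bool) :
    P[f | 𝒢 ⊔ MeasurableSpace.comap A inferInstance]
      =ᵐ[P[|{ω | A ω = a}]] (P[|{ω | A ω = a}])[f | 𝒢] := by
  have hm' : 𝒢 ⊔ MeasurableSpace.comap A inferInstance ≤ mΩ := sup_le h𝒢 hA.comap_le
  set S : Bool → Set Ω := fun b => {ω | A ω = b} with hSdef
  have hSmeas : ∀ b, MeasurableSet[mΩ] (S b) := fun b => hA (measurableSet_singleton b)
  have hSm' : ∀ b, MeasurableSet[𝒢 ⊔ MeasurableSpace.comap A inferInstance] (S b) :=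
    fun b => (le_sup_right : MeasurableSpace.comap A inferInstance ≤ _) _
      ⟨{b}, measurableSet_singleton b, rfl⟩
  set Pa : Bool → Measure Ω := fun b => P[|S b] with hPadef
  haveI hPaprob : ∀ b, IsProbabilityMeasure (Pa b) := fun b => cond_isProbabilityMeasure (h0 b)
  have hrestrict : ∀ b, P.restrict (S b) = P (S b) • Pa b := by
    intro b
    show P.restrict (S b) = P (S b) • ((P (S b))⁻¹ • P.restrict (S b))
    rw [smul_smul, ENNReal.mul_inv_cancel (h0 b) (measure_ne_top P _), one_smul]
  have hfPa : ∀ b, Integrable f (Pa b) :=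
    fun b => (hf.restrict (s := S b)).smul_measure (ENNReal.inv_ne_top.2 (h0 b))
  set g : Bool → Ω → ℝ := fun b => (Pa b)[f | 𝒢] with hgdef
  have hgint : ∀ b, Integrable ((S b).indicator (g b)) P := by
    intro b
    rw [integrable_indicator_iff (hSmeas b)]
    show Integrable (g b) (P.restrict (S b))
    rw [hrestrict b]
    exact integrable_condExp.smul_measure (measure_ne_top P _)
  set h : Ω → ℝ := (S true).indicator (g true) + (S false).indicator (g false) with hhdef
  have hint : Integrable h P := (hgint true).add (hgint false)
  have harm : ∀ (b : Bool) B, MeasurableSet[𝒢] B →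
      ∫ x in B ∩ S b, h x ∂P = ∫ x in B ∩ S b, f x ∂P := by
    intro b B hB
    have hBm : MeasurableSet[mΩ] B := h𝒢 _ hB
    have hBS : MeasurableSet[mΩ] (B ∩ S b) := hBm.inter (hSmeas b)
    have hpt : Set.EqOn h (g b) (B ∩ S b) := by
      intro x hx
      have hx' : A x = b := hx.2
      cases b <;> simp [hhdef, Set.indicator_apply, hSdef, hx']
    rw [setIntegral_congr_fun hBS hpt]
    have hmeq : P.restrict (B ∩ S b) = P (S b) • (Pa b).restrict B := by
      rw [← Measure.restrict_restrict hBm, hrestrict b, Measure.restrict_smul]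
    have key : ∀ u : Ω → ℝ,
        ∫ x in B ∩ S b, u x ∂P = (P (S b)).toReal * ∫ x in B, u x ∂(Pa b) := by
      intro u
      rw [show (∫ x in B ∩ S b, u x ∂P) = ∫ x, u x ∂(P.restrict (B ∩ S b)) from rfl,
        hmeq, integral_smul_measure]
      rfl
    rw [key, key, setIntegral_condExp h𝒢 (hfPa b) hB]
  have hcompl : S false = (S true)ᶜ := by
    ext x; simp [hSdef]
  have hmain : h =ᵐ[P] P[f | 𝒢 ⊔ MeasurableSpace.comap A inferInstance] := by
    refine ae_eq_condExp_of_forall_setIntegral_eq hm' hf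
      (fun s _ _ => hint.integrableOn) (fun s hs _ => ?_) ?_
    · obtain ⟨B₁, B₂, hB₁, hB₂, rfl⟩ := aux_sup_comap_bool 𝒢 A hs
      rw [← hcompl]
      have hdisj : Disjoint (B₁ ∩ S true) (B₂ ∩ S false) := by
        rw [hcompl]
        exact disjoint_compl_right.mono Set.inter_subset_right Set.inter_subset_right
      have hBS₂ : MeasurableSet[mΩ] (B₂ ∩ S false) := (h𝒢 _ hB₂).inter (hSmeas false)
      rw [setIntegral_union hdisj hBS₂ hint.integrableOn hint.integrableOn,
        setIntegral_union hdisj hBS₂ hf.integrableOn hf.integrableOn,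
        harm true B₁ hB₁, harm false B₂ hB₂]
    · refine StronglyMeasurable.aestronglyMeasurable ?_
      exact ((stronglyMeasurable_condExp.mono (le_sup_left : 𝒢 ≤ _)).indicator (hSm' true)).add
        ((stronglyMeasurable_condExp.mono (le_sup_left : 𝒢 ≤ _)).indicator (hSm' false))
  have h1 : P[f | 𝒢 ⊔ MeasurableSpace.comap A inferInstance] =ᵐ[Pa a] h :=
    (cond_absolutelyContinuous (s := S a)).ae_le hmain.symm
  have h2 : h =ᵐ[Pa a] g a := by
    have hae : ∀ᵐ ω ∂(Pa a), ω ∈ S a := by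
      rw [ae_iff]
      have heq : (Pa a) {ω | ¬ ω ∈ S a} = (P (S a))⁻¹ * P (S a ∩ {ω | ¬ ω ∈ S a}) :=
        cond_apply (hSmeas a) P _
      have hempty : S a ∩ {ω | ¬ ω ∈ S a} = ∅ := by ext x; simp
      rw [heq, hempty, measure_empty, mul_zero]
    filter_upwards [hae] with x hx
    have hx' : A x = a := hx
    cases a <;> simp [hhdef, Set.indicator_apply, hSdef, hx']
  exact h1.trans h2

/-- **Conditional independence given a binary variable in the conditioning set is equivalent
to arm-wise conditional independence.** For `A : Ω → {0,1}` with `0 < P(A=1) < 1`,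
`σ(Z) ⫫ σ(R) | 𝒢 ∨ σ(A)` under `P` iff for each `a`, `σ(Z) ⫫ σ(R) | 𝒢` under `P(·|{A=a})`. -/
theorem stmt13
    {Ω E₁ E₂ : Type*} [mΩ : MeasurableSpace Ω] [StandardBorelSpace Ω] [Nonempty Ω]
    [mE₁ : MeasurableSpace E₁] [StandardBorelSpace E₁]
    [mE₂ : MeasurableSpace E₂] [StandardBorelSpace E₂]
    (P : Measure Ω) [IsProbabilityMeasure P]
    (𝒢 : MeasurableSpace Ω) (h𝒢 : 𝒢 ≤ mΩ)
    (A : Ω → Bool) (hA : Measurable[mΩ] A)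
    (hA1 : 0 < P {ω | A ω = true}) (hA1' : P {ω | A ω = true} < 1)
    (Z : Ω → E₁) (hZ : Measurable[mΩ] Z)
    (R : Ω → E₂) (hR : Measurable[mΩ] R) :
    CondIndep (𝒢 ⊔ MeasurableSpace.comap A inferInstance) (MeasurableSpace.comap Z mE₁)
        (MeasurableSpace.comap R mE₂) (sup_le h𝒢 hA.comap_le) P
      ↔ ∀ a : Bool, CondIndep 𝒢 (MeasurableSpace.comap Z mE₁)
          (MeasurableSpace.comap R mE₂) h𝒢 (P[|{ω | A ω = a}]) := by
  have hTmeas : MeasurableSet[mΩ] {ω | A ω = true} := hA (measurableSet_singleton true)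
  have hcompl : {ω | A ω = false} = {ω | A ω = true}ᶜ := by ext x; simp
  have h0 : ∀ b : Bool, P {ω | A ω = b} ≠ 0 := by
    intro b
    cases b
    · rw [hcompl, prob_compl_eq_one_sub hTmeas]
      simp only [ne_eq, tsub_eq_zero_iff_le, not_le]
      exact hA1'
    · exact hA1.ne'
  have hZ' : MeasurableSpace.comap Z mE₁ ≤ mΩ := hZ.comap_le
  have hR' : MeasurableSpace.comap R mE₂ ≤ mΩ := hR.comap_le
  have hind : ∀ t : Set Ω, MeasurableSet[mΩ] t → Integrable (t.indicator (fun _ => (1:ℝ))) P :=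
    fun t ht => aux_indicator_integrable (mΩ := mΩ) P ht
  rw [condIndep_iff (mΩ := mΩ) _ _ _ (sup_le h𝒢 hA.comap_le) hZ' hR' P]
  have hRHS : (∀ a : Bool, CondIndep 𝒢 (MeasurableSpace.comap Z mE₁)
        (MeasurableSpace.comap R mE₂) h𝒢 (P[|{ω | A ω = a}]))
      ↔ ∀ a : Bool, ∀ t1 t2, MeasurableSet[MeasurableSpace.comap Z mE₁] t1 →
          MeasurableSet[MeasurableSpace.comap R mE₂] t2 →
          ((P[|{ω | A ω = a}])⟦t1 ∩ t2 | 𝒢⟧)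
            =ᵐ[P[|{ω | A ω = a}]] ((P[|{ω | A ω = a}])⟦t1 | 𝒢⟧) * ((P[|{ω | A ω = a}])⟦t2 | 𝒢⟧) :=
    forall_congr' (fun a => condIndep_iff (mΩ := mΩ) 𝒢 _ _ h𝒢 hZ' hR' _)
  rw [hRHS]
  constructor
  · intro H a t1 t2 ht1 ht2
    have ht1' : MeasurableSet[mΩ] t1 := hZ' _ ht1
    have ht2' : MeasurableSet[mΩ] t2 := hR' _ ht2
    have e12 := aux_condexp_cond 𝒢 (mΩ := mΩ) P h𝒢 hA h0 (hind _ (ht1'.inter ht2')) a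
    have e1 := aux_condexp_cond 𝒢 (mΩ := mΩ) P h𝒢 hA h0 (hind _ ht1') a
    have e2 := aux_condexp_cond 𝒢 (mΩ := mΩ) P h𝒢 hA h0 (hind _ ht2') a
    have hP := (H t1 t2 ht1 ht2).filter_mono
      (cond_absolutelyContinuous (s := {ω | A ω = a})).ae_le
    exact e12.symm.trans (hP.trans (e1.mul e2))
  · intro H t1 t2 ht1 ht2
    have ht1' : MeasurableSet[mΩ] t1 := hZ' _ ht1
    have ht2' : MeasurableSet[mΩ] t2 := hR' _ ht2
    have harm : ∀ a : Bool,
        (P⟦t1 ∩ t2 | 𝒢 ⊔ MeasurableSpace.comap A inferInstance⟧)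
          =ᵐ[P[|{ω | A ω = a}]]
        (P⟦t1 | 𝒢 ⊔ MeasurableSpace.comap A inferInstance⟧)
          * (P⟦t2 | 𝒢 ⊔ MeasurableSpace.comap A inferInstance⟧) := by
      intro a
      have e12 := aux_condexp_cond 𝒢 (mΩ := mΩ) P h𝒢 hA h0 (hind _ (ht1'.inter ht2')) a
      have e1 := aux_condexp_cond 𝒢 (mΩ := mΩ) P h𝒢 hA h0 (hind _ ht1') a
      have e2 := aux_condexp_cond 𝒢 (mΩ := mΩ) P h𝒢 hA h0 (hind _ ht2') a
      exact e12.trans ((H a t1 t2 ht1 ht2).trans (e1.symm.mul e2.symm))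
    have htrue := harm true
    have hfalse := harm false
    rw [hcompl] at hfalse
    exact aux_ae_of_cond P hTmeas htrue hfalse
end

section
/- Conditional g-formula: the arm-conditional observed mean identifies the potential-outcome conditional mean. Fix a ∈ {0,1} with P(A=a) > 0. Assume consistency; that σ(Y(a)) and σ(A) are conditionally independent given σ(X); that Y(a) is P-integrable; and that there is a measurable e_a : 𝒳 → ℝ with e_a(X) a version of P(A=a | σ(X)) and e_a(X) > 0 P-a.s. Let m_a : 𝒳 → ℝ be any measurable function such that m_a(X) is a version of the conditional expectation of Y given σ(X) under the conditional measure P(·|{A=a}), with m_a(X) P-integrable. Then m_a(X) = E[ Y(a) | σ(X) ] P-almost surely. -/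
open MeasureTheory ProbabilityTheory

/-!
Write `B = {A = a}` and `κ = P(B | σ(X))`. Conditional independence of `Y(a)` and `A` given `X`
gives `E[1_B Y(a) | X] = E[Y(a) | X] κ`. On the other hand, `m(X)` is a version of `E[Y | X]` under
`P(· | B)` and `Y = Y(a)` on `B`, so `1_B m(X)` and `1_B Y(a)` have the same integral over every
`σ(X)`-set, whence `E[1_B Y(a) | X] = m(X) κ`. Dividing by `κ > 0` gives the claim.
-/
namespace ProbabilityTheory

variable {Ω : Type*} {m : MeasurableSpace Ω} [mΩ : MeasurableSpace Ω]

lemma restrict_eq_measure_smul_cond (μ : Measure Ω) {s : Set Ω} (hs : μ s ≠ ⊤) :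
    μ.restrict s = μ s • μ[|s] := by
  rw [cond, smul_smul]
  rcases eq_or_ne (μ s) 0 with h | h
  · simp [Measure.restrict_eq_zero.2 h]
  · rw [ENNReal.mul_inv_cancel h hs, one_smul]

lemma integrable_cond_of_integrableOn {μ : Measure Ω} {s : Set Ω} {g : Ω → ℝ}
    (hg : IntegrableOn g s μ) : Integrable g μ[|s] := by
  rcases eq_or_ne (μ s) 0 with h | h
  · simp [cond_eq_zero_of_meas_eq_zero h]
  · exact hg.smul_measure (ENNReal.inv_ne_top.2 h)

lemma setIntegral_indicator_eq_of_ae_eq_condExp_cond (hm : m ≤ mΩ) {μ : Measure Ω}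
    [IsFiniteMeasure μ] {s t : Set Ω} (hs : MeasurableSet s) {f g : Ω → ℝ}
    (hg : IntegrableOn g s μ) (hfg : f =ᵐ[μ[|s]] (μ[|s])[g|m]) (ht : MeasurableSet[m] t) :
    ∫ x in t, s.indicator f x ∂μ = ∫ x in t, s.indicator g x ∂μ := by
  have h_restrict (h : Ω → ℝ) :
      ∫ x in t, s.indicator h x ∂μ = (μ s).toReal • ∫ x in t, h x ∂μ[|s] := by
    rw [setIntegral_indicator hs, ← Measure.restrict_restrict (hm t ht),
      restrict_eq_measure_smul_cond μ (measure_ne_top μ s), Measure.restrict_smul,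
      integral_smul_measure]
  rw [h_restrict, h_restrict, setIntegral_congr_ae (hm t ht) (hfg.mono fun x hx _ => hx),
    setIntegral_condExp hm (integrable_cond_of_integrableOn hg) ht]

lemma condExp_ae_eq_of_forall_setIntegral_eq (hm : m ≤ mΩ) {μ : Measure Ω}
    [SigmaFinite (μ.trim hm)] {f g : Ω → ℝ} (hf : Integrable f μ) (hg : Integrable g μ)
    (hfg : ∀ t, MeasurableSet[m] t → ∫ x in t, f x ∂μ = ∫ x in t, g x ∂μ) :
    μ[f|m] =ᵐ[μ] μ[g|m] :=
  ae_eq_condExp_of_forall_setIntegral_eq hm hg (fun _ _ _ => integrable_condExp.integrableOn)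
    (fun t ht _ => by rw [setIntegral_condExp hm hf ht, hfg t ht])
    stronglyMeasurable_condExp.aestronglyMeasurable

lemma CondIndepFun.condExp_mul_ae_eq [StandardBorelSpace Ω] (hm : m ≤ mΩ) {μ : Measure Ω}
    [IsFiniteMeasure μ] {f g : Ω → ℝ} (hf : Measurable f) (hg : Measurable g)
    (hfg : CondIndepFun m hm f g μ) (hfi : Integrable f μ) (hgi : Integrable g μ)
    (hfgi : Integrable (f * g) μ) :
    μ[f * g|m] =ᵐ[μ] μ[f|m] * μ[g|m] := by
  have h_indep : ∀ᵐ ω ∂μ, IndepFun f g (condExpKernel μ m ω) := by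
    have h := (condIndepFun_iff_map_prod_eq_prod_map_map (hm' := hm) hf hg).1 hfg
    filter_upwards [ae_of_ae_trim hm h] with ω hω
    rw [indepFun_iff_map_prod_eq_prod_map_map hf.aemeasurable hg.aemeasurable]
    simpa [Kernel.map_apply _ (hf.prodMk hg), Kernel.prod_apply, Kernel.map_apply _ hf,
      Kernel.map_apply _ hg] using hω
  filter_upwards [h_indep, condExp_ae_eq_integral_condExpKernel hm hfgi,
    condExp_ae_eq_integral_condExpKernel hm hfi, condExp_ae_eq_integral_condExpKernel hm hgi]
    with ω hω h_fg h_f h_g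
  rw [h_fg, Pi.mul_apply, h_f, h_g]
  exact hω.integral_mul_eq_mul_integral hf.aestronglyMeasurable hg.aestronglyMeasurable

lemma ae_eq_condExp_of_ae_eq_condExp_cond [StandardBorelSpace Ω] (hm : m ≤ mΩ) {μ : Measure Ω}
    [IsFiniteMeasure μ] {s : Set Ω} (hs : MeasurableSet s) {g h : Ω → ℝ} (hg : Measurable g)
    (hgi : Integrable g μ) (h_indep : CondIndepFun m hm g (s.indicator (1 : Ω → ℝ)) μ)
    (h_pos : ∀ᵐ x ∂μ, 0 < μ[s.indicator (1 : Ω → ℝ)|m] x) (hh : StronglyMeasurable[m] h)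
    (hhi : Integrable h μ) (h_ver : h =ᵐ[μ[|s]] (μ[|s])[g|m]) :
    h =ᵐ[μ] μ[g|m] := by
  have h_mul_one (f : Ω → ℝ) : s.indicator f = f * s.indicator (1 : Ω → ℝ) := by
    ext x; by_cases hx : x ∈ s <;> simp [hx]
  have h_one : Integrable (s.indicator (1 : Ω → ℝ)) μ := (integrable_const 1).indicator hs
  have h_g : μ[s.indicator g|m] =ᵐ[μ] μ[g|m] * μ[s.indicator 1|m] := by
    rw [h_mul_one g]
    exact h_indep.condExp_mul_ae_eq hm hg (measurable_one.indicator hs) hgi h_one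
      (h_mul_one g ▸ hgi.indicator hs)
  have h_h : μ[s.indicator g|m] =ᵐ[μ] h * μ[s.indicator 1|m] := by
    calc μ[s.indicator g|m] =ᵐ[μ] μ[s.indicator h|m] :=
          condExp_ae_eq_of_forall_setIntegral_eq hm (hgi.indicator hs) (hhi.indicator hs)
            fun t ht => (setIntegral_indicator_eq_of_ae_eq_condExp_cond hm hs hgi.integrableOn
              h_ver ht).symm
      _ =ᵐ[μ] h * μ[s.indicator 1|m] := by
          rw [h_mul_one h]
          exact condExp_mul_of_stronglyMeasurable_left hh (h_mul_one h ▸ hhi.indicator hs) h_one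
  filter_upwards [h_g, h_h, h_pos] with x hx_g hx_h hx_pos
  exact mul_right_cancel₀ hx_pos.ne' (hx_h.symm.trans hx_g)

end ProbabilityTheory

theorem stmt15_general
    {Ω 𝓧 : Type*} [mΩ : MeasurableSpace Ω] [StandardBorelSpace Ω]
    [m𝓧 : MeasurableSpace 𝓧]
    (P : Measure Ω) [IsProbabilityMeasure P]
    (X : Ω → 𝓧) (hX : Measurable X)
    (A : Ω → Bool) (hA : Measurable A)
    (Y : Bool → Ω → ℝ) (hYmeas : ∀ a, Measurable (Y a))
    (Yo : Ω → ℝ) (hconsY : Yo = fun ω => Y (A ω) ω)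
    -- fixed arm with positive probability
    (a : Bool)
    -- unconfoundedness: Y(a) ⫫ A | σ(X)
    (hunconf : CondIndep (MeasurableSpace.comap X m𝓧)
      (MeasurableSpace.comap (Y a) inferInstance)
      (MeasurableSpace.comap A inferInstance) hX.comap_le P)
    (hYaInt : Integrable (Y a) P)
    -- propensity score, a.s. positive
    (e : 𝓧 → ℝ)
    (heVer : (fun ω => e (X ω)) =ᵐ[P]
      P[({ω | A ω = a}).indicator (fun _ => (1 : ℝ)) | MeasurableSpace.comap X m𝓧])
    (hePos : ∀ᵐ ω ∂P, 0 < e (X ω))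
    -- m : version of E[Y | σ(X)] under P(·|{A=a})
    (m : 𝓧 → ℝ) (hm : Measurable m)
    (hmVer : (fun ω => m (X ω)) =ᵐ[P[|{ω | A ω = a}]]
      (P[|{ω | A ω = a}])[Yo | MeasurableSpace.comap X m𝓧])
    (hmInt : Integrable (fun ω => m (X ω)) P) :
    (fun ω => m (X ω)) =ᵐ[P] P[Y a | MeasurableSpace.comap X m𝓧] := by
  have hB : MeasurableSet {ω | A ω = a} := hA (measurableSet_singleton a)
  have h_indicator : {ω | A ω = a}.indicator (1 : Ω → ℝ) = ({a} : Set Bool).indicator 1 ∘ A := by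
    ext ω; simp [Set.indicator_apply, Pi.single_apply]
  have h_indep : CondIndepFun _ hX.comap_le (Y a) ({ω | A ω = a}.indicator (1 : Ω → ℝ)) P := by
    rw [h_indicator]
    exact ((condIndepFun_iff_condIndep _ _ _ _ _).2 hunconf).comp measurable_id
      (measurable_one.indicator (measurableSet_singleton a))
  have h_pos :
      ∀ᵐ ω ∂P, 0 < P[{ω | A ω = a}.indicator (1 : Ω → ℝ)|MeasurableSpace.comap X m𝓧] ω := by
    filter_upwards [heVer, hePos] with ω he hpos
    exact he ▸ hpos
  have h_cons : Yo =ᵐ[P[|{ω | A ω = a}]] Y a := by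
    filter_upwards [ae_cond_mem hB] with ω hω
    simp [hconsY, show A ω = a from hω]
  exact ae_eq_condExp_of_ae_eq_condExp_cond hX.comap_le hB (hYmeas a) hYaInt h_indep h_pos
    (hm.comp (Measurable.of_comap_le le_rfl)).stronglyMeasurable hmInt
    (hmVer.trans (condExp_congr_ae h_cons))

/-- **Conditional g-formula:** the arm-conditional observed mean identifies the
potential-outcome conditional mean. If `Y = Y(A)` (consistency), `σ(Y(a)) ⫫ σ(A) | σ(X)`,
`Y(a)` is integrable, and the propensity score `e_a(X)` is a.s. positive, then any
measurable `m_a` with `m_a(X)` a version of `E[Y | σ(X)]` under `P(·|{A=a})` satisfies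
`m_a(X) = E[Y(a) | σ(X)]` `P`-a.s. -/
theorem stmt15
    {Ω 𝓧 : Type*} [mΩ : MeasurableSpace Ω] [StandardBorelSpace Ω] [Nonempty Ω]
    [m𝓧 : MeasurableSpace 𝓧] [StandardBorelSpace 𝓧]
    (P : Measure Ω) [IsProbabilityMeasure P]
    (X : Ω → 𝓧) (hX : Measurable X)
    (A : Ω → Bool) (hA : Measurable A)
    (Y : Bool → Ω → ℝ) (hYmeas : ∀ a, Measurable (Y a))
    (Yo : Ω → ℝ) (hconsY : Yo = fun ω => Y (A ω) ω)
    -- fixed arm with positive probability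
    (a : Bool) (haPos : 0 < P {ω | A ω = a})
    -- unconfoundedness: Y(a) ⫫ A | σ(X)
    (hunconf : CondIndep (MeasurableSpace.comap X m𝓧)
      (MeasurableSpace.comap (Y a) inferInstance)
      (MeasurableSpace.comap A inferInstance) hX.comap_le P)
    (hYaInt : Integrable (Y a) P)
    -- propensity score, a.s. positive
    (e : 𝓧 → ℝ) (he : Measurable e)
    (heVer : (fun ω => e (X ω)) =ᵐ[P]
      P[({ω | A ω = a}).indicator (fun _ => (1 : ℝ)) | MeasurableSpace.comap X m𝓧])
    (hePos : ∀ᵐ ω ∂P, 0 < e (X ω))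
    -- m : version of E[Y | σ(X)] under P(·|{A=a})
    (m : 𝓧 → ℝ) (hm : Measurable m)
    (hmVer : (fun ω => m (X ω)) =ᵐ[P[|{ω | A ω = a}]]
      (P[|{ω | A ω = a}])[Yo | MeasurableSpace.comap X m𝓧])
    (hmInt : Integrable (fun ω => m (X ω)) P) :
    (fun ω => m (X ω)) =ᵐ[P] P[Y a | MeasurableSpace.comap X m𝓧] :=
  stmt15_general (mΩ := mΩ) (m𝓧 := m𝓧) P X hX A hA Y hYmeas Yo hconsY a hunconf hYaInt e heVer hePos
    m hm hmVer hmInt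
end
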